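/- arXiv:2107.03171 — 5 statements merged into one kernel-verified Lean document; each statement's English description precedes it below -/
import Mathlib

section
/- There exists an absolute constant C > 0 such that the following holds for all s ≥ 2. Let g : {0,1}^s → {0,1} satisfy g(0^s) = 0 and g(x) = 1 for every x of Hamming weight exactly 1. Then there exist a positive integer ℓ ≤ C·log₂ s and a finitely supported probability distribution over ℓ-tuples (S_1, …, S_ℓ) of subsets of [s] such that for every a ∈ {0,1}^s, Pr[ OR_ℓ( g(a ∧ S_1), …, g(a ∧ S_ℓ) ) ≠ OR_s(a) ] ≤ 1/10, where a ∧ S denotes the input that agrees with a on the coordinates in S and is 0 on all coordinates outside S. -/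
open scoped Classical

noncomputable def evalBool {ι : Type} (a : ι → Bool) (P : MvPolynomial ι ℝ) : ℝ :=
  MvPolynomial.eval (fun i => if a i then (1:ℝ) else 0) P

def HasProbPoly {ι : Type} (f : (ι → Bool) → Bool) (ε : ℝ) (d : ℕ) : Prop :=
  ∃ (k : ℕ) (w : Fin k → ℝ) (P : Fin k → MvPolynomial ι ℝ),
    (∀ i, 0 ≤ w i) ∧ (∑ i, w i = 1) ∧ (∀ i, (P i).totalDegree ≤ d) ∧
    ∀ a : ι → Bool,
      ∑ i ∈ Finset.univ.filter
          (fun i => evalBool a (P i) ≠ (if f a then (1:ℝ) else 0)), w i ≤ ε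

noncomputable def pdeg {ι : Type} (ε : ℝ) (f : (ι → Bool) → Bool) : ℕ :=
  sInf {d | HasProbPoly f ε d}

def TrulyVariate {ι : Type} (f : (ι → Bool) → Bool) : Prop :=
  ∀ i : ι, ∃ a, f (Function.update a i (!(a i))) ≠ f a

def ORf (n : ℕ) : (Fin n → Bool) → Bool := fun a => decide (∃ i, a i = true)

noncomputable def sensitivity {n : ℕ} (f : (Fin n → Bool) → Bool) : ℕ :=
  Finset.univ.sup (fun a : Fin n → Bool =>
    (Finset.univ.filter (fun i : Fin n => f (Function.update a i (!(a i))) ≠ f a)).card)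

/-- `a ∧ S`: the input agreeing with `a` on `S` and `0` outside `S`. -/
def maskInput {s : ℕ} (a : Fin s → Bool) (S : Finset (Fin s)) : Fin s → Bool :=
  fun m => a m && decide (m ∈ S)

/-! Use `18 (⌊log s⌋ + 1)` independent random restrictions in blocks of 18; in block `t` every
coordinate is kept independently with probability `2 ^ -(t + 2)`. If `a` has weight `w ≥ 1` and
`t = ⌊log w⌋`, then `w 2 ^ -(t + 2) ∈ [1/4, 1/2]`, so a restriction of block `t` keeps exactly one
`1` of `a` with probability at least `1/8`, and there `g` answers `1`. The OR of all answers can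
then be wrong only if the 18 rounds of that block all fail, which has probability at most
`(7/8) ^ 18 < 1/10`. For `a = 0` every answer is `g 0 = 0`, so the OR is never wrong. -/

open Finset

section ProductWeights

variable {ι α R : Type*} [Fintype ι] [DecidableEq ι] [Fintype α]

theorem sum_prod_eq_one [CommSemiring R] (Q : ι → α → R) (hQ : ∀ i, ∑ x, Q i x = 1) :
    ∑ f : ι → α, ∏ i, Q i (f i) = 1 := by
  rw [← Fintype.prod_sum]
  simp [hQ]

theorem sum_filter_forall_prod_eq_prod_sum_filter [CommSemiring R] (Q : ι → α → R)
    (hQ : ∀ i, ∑ x, Q i x = 1) (J : Finset ι) (P : ι → α → Prop) [∀ i, DecidablePred (P i)] :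
    ∑ f ∈ univ.filter (fun f : ι → α => ∀ i ∈ J, P i (f i)), ∏ i, Q i (f i)
      = ∏ i ∈ J, ∑ x ∈ univ.filter (P i), Q i x := by
  have hbox : univ.filter (fun f : ι → α => ∀ i ∈ J, P i (f i))
      = Fintype.piFinset (fun i => if i ∈ J then univ.filter (P i) else univ) := by
    ext f
    simp only [mem_filter, mem_univ, true_and, Fintype.mem_piFinset]
    exact forall_congr' fun i => by split_ifs <;> simp [*]
  rw [hbox, ← prod_univ_sum, ← Fintype.prod_ite_mem J]
  refine prod_congr rfl fun i _ => ?_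
  split_ifs <;> simp [hQ]

theorem sum_filter_forall_prod_le_pow [CommSemiring R] [PartialOrder R] [IsOrderedRing R]
    (Q : ι → α → R) (hQ0 : ∀ i x, 0 ≤ Q i x) (hQ : ∀ i, ∑ x, Q i x = 1) (J : Finset ι)
    (P : ι → α → Prop) [∀ i, DecidablePred (P i)] (q : R)
    (hq : ∀ i ∈ J, ∑ x ∈ univ.filter (P i), Q i x ≤ q) :
    ∑ f ∈ univ.filter (fun f : ι → α => ∀ i ∈ J, P i (f i)), ∏ i, Q i (f i) ≤ q ^ #J := by
  rw [sum_filter_forall_prod_eq_prod_sum_filter Q hQ, ← prod_const]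
  exact prod_le_prod (fun i _ => sum_nonneg fun x _ => hQ0 i x) hq

end ProductWeights

def boolWeight (p : ℝ) (b : Bool) : ℝ := if b then p else 1 - p

theorem boolWeight_nonneg {p : ℝ} (hp0 : 0 ≤ p) (hp1 : p ≤ 1) (b : Bool) :
    0 ≤ boolWeight p b := by
  cases b <;> simp [boolWeight] <;> linarith

theorem sum_boolWeight (p : ℝ) : ∑ b, boolWeight p b = 1 := by
  simp [boolWeight]

section Bernoulli

variable {ι : Type*} [Fintype ι]

noncomputable def bernoulliWeight (p : ℝ) (f : ι → Bool) : ℝ := ∏ i, boolWeight p (f i)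

theorem bernoulliWeight_nonneg {p : ℝ} (hp0 : 0 ≤ p) (hp1 : p ≤ 1) (f : ι → Bool) :
    0 ≤ bernoulliWeight p f :=
  prod_nonneg fun i _ => boolWeight_nonneg hp0 hp1 (f i)

theorem bernoulliWeight_half_pow_nonneg (n : ℕ) (f : ι → Bool) :
    0 ≤ bernoulliWeight ((1 / 2) ^ n) f :=
  bernoulliWeight_nonneg (by positivity) (pow_le_one₀ (by norm_num) (by norm_num)) f

def HitsOnce (a f : ι → Bool) : Prop := #(univ.filter fun i => (a i && f i) = true) = 1

variable [DecidableEq ι]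

theorem sum_bernoulliWeight (p : ℝ) : ∑ f : ι → Bool, bernoulliWeight p f = 1 :=
  sum_prod_eq_one _ fun _ => sum_boolWeight p

theorem sum_bernoulliWeight_filter_eq_single {p : ℝ} {A : Finset ι} {i₀ : ι} (hi₀ : i₀ ∈ A) :
    ∑ f ∈ univ.filter (fun f : ι → Bool => ∀ i ∈ A, f i = decide (i = i₀)), bernoulliWeight p f
      = p * (1 - p) ^ (#A - 1) := by
  unfold bernoulliWeight
  rw [sum_filter_forall_prod_eq_prod_sum_filter _ (fun _ => sum_boolWeight p) A
    (fun i x => x = decide (i = i₀))]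
  simp only [filter_eq', mem_univ, if_true, sum_singleton]
  rw [← mul_prod_erase A _ hi₀, decide_eq_true rfl]
  have hrest : ∀ i ∈ A.erase i₀, boolWeight p (decide (i = i₀)) = 1 - p :=
    fun i hi => by simp [boolWeight, ne_of_mem_erase hi]
  rw [prod_congr rfl hrest, prod_const, card_erase_of_mem hi₀]
  rfl

theorem card_mul_le_sum_bernoulliWeight_hitsOnce (a : ι → Bool) {p : ℝ} (hp0 : 0 ≤ p)
    (hp1 : p ≤ 1) :
    #(univ.filter fun i => a i = true) * (p * (1 - p) ^ (#(univ.filter fun i => a i = true) - 1))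
      ≤ ∑ f ∈ univ.filter (HitsOnce a), bernoulliWeight p f := by
  set A := univ.filter fun i => a i = true
  set piece : ι → Finset (ι → Bool) := fun i₀ =>
    univ.filter fun f => ∀ i ∈ A, f i = decide (i = i₀)
  have hdisj : (A : Set ι).PairwiseDisjoint piece := by
    intro i₀ hi₀ i₁ hi₁ hne
    refine disjoint_left.mpr fun f hf₀ hf₁ => ?_
    have h₀ := (mem_filter.mp hf₀).2 i₀ hi₀
    have h₁ := (mem_filter.mp hf₁).2 i₀ hi₀
    simp [hne] at h₀ h₁
    simp [h₀] at h₁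
  have hsub : A.biUnion piece ⊆ univ.filter (HitsOnce a) := by
    intro f hf
    obtain ⟨i₀, hi₀, hf⟩ := mem_biUnion.mp hf
    have hf := (mem_filter.mp hf).2
    refine mem_filter.mpr ⟨mem_univ f, card_eq_one.mpr ⟨i₀, ?_⟩⟩
    ext i
    by_cases hi : i ∈ A
    · simp [hf i hi, (mem_filter.mp hi).2]
    · have hai : a i = false := by simpa [A] using hi
      simp only [mem_filter, mem_univ, true_and, hai, Bool.false_and, mem_singleton]
      exact ⟨fun h => absurd h Bool.false_ne_true, fun h => absurd (h ▸ hi₀) hi⟩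
  calc (#A : ℝ) * (p * (1 - p) ^ (#A - 1))
        = ∑ i₀ ∈ A, ∑ f ∈ piece i₀, bernoulliWeight p f := by
        rw [sum_congr rfl fun i₀ hi₀ => sum_bernoulliWeight_filter_eq_single hi₀, sum_const,
          nsmul_eq_mul]
    _ = ∑ f ∈ A.biUnion piece, bernoulliWeight p f := (sum_biUnion hdisj).symm
    _ ≤ ∑ f ∈ univ.filter (HitsOnce a), bernoulliWeight p f :=
        sum_le_sum_of_subset_of_nonneg hsub fun f _ _ => bernoulliWeight_nonneg hp0 hp1 f

end Bernoulli

theorem one_div_eight_le_mul_mul_one_sub_pow {w : ℕ} {p : ℝ} (hw : 1 ≤ w) (hp : 0 ≤ p)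
    (hlo : 1 / 4 ≤ w * p) (hhi : w * p ≤ 1 / 2) : 1 / 8 ≤ w * (p * (1 - p) ^ (w - 1)) := by
  have hp2 : p ≤ 1 / 2 := (le_mul_of_one_le_left hp (by exact_mod_cast hw)).trans hhi
  have hbern := one_add_mul_le_pow (a := -p) (by linarith) (w - 1)
  rw [Nat.cast_sub hw, Nat.cast_one, ← sub_eq_add_neg] at hbern
  have hhalf : 1 / 2 ≤ (1 - p) ^ (w - 1) := by linarith
  calc (1 : ℝ) / 8 = 1 / 4 * (1 / 2) := by norm_num
    _ ≤ (w * p) * (1 - p) ^ (w - 1) := mul_le_mul hlo hhalf (by norm_num) (by linarith)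
    _ = w * (p * (1 - p) ^ (w - 1)) := by ring

theorem mul_half_pow_log_add_two_mem_Icc {w : ℕ} (hw : w ≠ 0) :
    (w : ℝ) * (1 / 2) ^ (Nat.log 2 w + 2) ∈ Set.Icc (1 / 4) (1 / 2) := by
  have hlo : ((2 ^ Nat.log 2 w : ℕ) : ℝ) ≤ w := by exact_mod_cast Nat.pow_log_le_self 2 hw
  have hhi : (w : ℝ) ≤ ((2 ^ (Nat.log 2 w + 1) : ℕ) : ℝ) := by
    exact_mod_cast (Nat.lt_pow_succ_log_self one_lt_two w).le
  push_cast at hlo hhi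
  rw [pow_succ] at hhi
  have hpos : (0 : ℝ) < 2 ^ Nat.log 2 w := by positivity
  rw [one_div_pow, pow_add, mul_one_div, Set.mem_Icc,
    div_le_div_iff₀ (by norm_num) (by positivity), div_le_div_iff₀ (by positivity) (by norm_num)]
  constructor <;> nlinarith

theorem sum_bernoulliWeight_not_hitsOnce_le {ι : Type*} [Fintype ι] [DecidableEq ι]
    {a : ι → Bool} (ha : ∃ i, a i = true) :
    ∑ f ∈ univ.filter (fun f => ¬ HitsOnce a f),
      bernoulliWeight ((1 / 2) ^ (Nat.log 2 #(univ.filter fun i => a i = true) + 2)) f ≤ 7 / 8 := by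
  set w := #(univ.filter fun i => a i = true)
  set p : ℝ := (1 / 2) ^ (Nat.log 2 w + 2)
  have hw : 1 ≤ w := by
    obtain ⟨i, hi⟩ := ha
    exact card_pos.mpr ⟨i, by simp [hi]⟩
  have hp0 : 0 ≤ p := by positivity
  have hp1 : p ≤ 1 := pow_le_one₀ (by norm_num) (by norm_num)
  have hwp := mul_half_pow_log_add_two_mem_Icc (w := w) (by omega)
  have hhit : 1 / 8 ≤ ∑ f ∈ univ.filter (HitsOnce a), bernoulliWeight p f :=
    (one_div_eight_le_mul_mul_one_sub_pow hw hp0 hwp.1 hwp.2).trans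
      (card_mul_le_sum_bernoulliWeight_hitsOnce a hp0 hp1)
  have htotal := sum_filter_add_sum_filter_not univ (HitsOnce a) (bernoulliWeight p)
  rw [sum_bernoulliWeight] at htotal
  linarith

/-- Round `(t, r)` keeps each coordinate independently with probability `2 ^ -(t + 2)`, so the
18 rounds of block `t` are tuned to inputs of Hamming weight about `2 ^ t`. -/
noncomputable def samplingWeight (T s : ℕ) (ω : Fin T × Fin 18 → Fin s → Bool) : ℝ :=
  ∏ x, bernoulliWeight ((1 / 2) ^ ((x.1 : ℕ) + 2)) (ω x)

theorem samplingWeight_nonneg (T s : ℕ) (ω : Fin T × Fin 18 → Fin s → Bool) :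
    0 ≤ samplingWeight T s ω := by
  unfold samplingWeight
  exact prod_nonneg fun _ _ => bernoulliWeight_half_pow_nonneg _ _

theorem sum_samplingWeight (T s : ℕ) : ∑ ω, samplingWeight T s ω = 1 := by
  unfold samplingWeight
  exact sum_prod_eq_one _ fun _ => sum_bernoulliWeight _

theorem sum_samplingWeight_forall_not_hitsOnce_le {T s : ℕ} (hT : Nat.log 2 s < T)
    {a : Fin s → Bool} (ha : ∃ m, a m = true) :
    ∑ ω ∈ univ.filter (fun ω => ∀ x, ¬ HitsOnce a (ω x)), samplingWeight T s ω ≤ 1 / 10 := by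
  set t := Nat.log 2 #(univ.filter fun i => a i = true)
  have ht : t < T := (Nat.log_mono_right (card_le_univ _)).trans_lt (by simpa using hT)
  set J := univ.filter fun x : Fin T × Fin 18 => (x.1 : ℕ) = t
  have hJ : #J = 18 := by
    have : J = {(⟨t, ht⟩ : Fin T)} ×ˢ univ := by ext ⟨y, r⟩; simp [J, Fin.ext_iff, eq_comm]
    simp [this]
  calc ∑ ω ∈ univ.filter (fun ω => ∀ x, ¬ HitsOnce a (ω x)), samplingWeight T s ω
      ≤ ∑ ω ∈ univ.filter (fun ω => ∀ x ∈ J, ¬ HitsOnce a (ω x)), samplingWeight T s ω :=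
        sum_le_sum_of_subset_of_nonneg
          (fun ω hω => mem_filter.mpr ⟨mem_univ ω, fun x _ => (mem_filter.mp hω).2 x⟩)
          fun ω _ _ => samplingWeight_nonneg T s ω
    _ ≤ (7 / 8) ^ #J := by
        have hround := sum_filter_forall_prod_le_pow
          (fun (x : Fin T × Fin 18) f => bernoulliWeight ((1 / 2) ^ ((x.1 : ℕ) + 2)) f)
          (fun _ => bernoulliWeight_half_pow_nonneg _) (fun _ => sum_bernoulliWeight _) J
          (fun _ f => ¬ HitsOnce a f) (7 / 8) fun x hx => by
            rw [(mem_filter.mp hx).2]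
            exact sum_bernoulliWeight_not_hitsOnce_le ha
        exact hround
    _ ≤ 1 / 10 := by rw [hJ]; norm_num

theorem sum_samplingWeight_ORf_ne_le {s T : ℕ} (hT : Nat.log 2 s < T)
    {g : (Fin s → Bool) → Bool} (hg0 : g (fun _ => false) = false)
    (hg1 : ∀ x : Fin s → Bool, #(univ.filter fun i => x i = true) = 1 → g x = true)
    (a : Fin s → Bool) :
    ∑ ω ∈ univ.filter (fun ω =>
        ORf (T * 18) (fun j => g fun m => a m && ω (finProdFinEquiv.symm j) m) ≠ ORf s a),
      samplingWeight T s ω ≤ 1 / 10 := by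
  by_cases ha : ∃ m, a m = true
  · refine (sum_le_sum_of_subset_of_nonneg (fun ω hω => ?_)
      fun ω _ _ => samplingWeight_nonneg T s ω).trans
      (sum_samplingWeight_forall_not_hitsOnce_le hT ha)
    refine mem_filter.mpr ⟨mem_univ ω, fun x hx => (mem_filter.mp hω).2 ?_⟩
    have hgx : g (fun m => a m && ω x m) = true := hg1 _ hx
    simp only [ORf, decide_eq_decide]
    exact ⟨fun _ => ha, fun _ => ⟨finProdFinEquiv x, by simpa using hgx⟩⟩
  · simp only [not_exists, Bool.not_eq_true] at ha
    simp [ORf, ha, hg0]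

theorem cast_log_add_one_mul_le_logb {s : ℕ} (hs : 2 ≤ s) :
    (((Nat.log 2 s + 1) * 18 : ℕ) : ℝ) ≤ 36 * Real.logb 2 s := by
  have hlog : (Nat.log 2 s : ℝ) ≤ Real.logb 2 s := by exact_mod_cast Real.natLog_le_logb s 2
  have hone : 1 ≤ Real.logb 2 s := by
    rw [Real.le_logb_iff_rpow_le one_lt_two (by positivity)]
    simpa using (show (2 : ℝ) ≤ s by exact_mod_cast hs)
  push_cast
  linarith

theorem maskInput_filter_eq {s : ℕ} (a b : Fin s → Bool) :
    maskInput a (univ.filter fun m => b m = true) = fun m => a m && b m := by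
  funext m
  simp [maskInput]

theorem or_reduction :
    ∃ C : ℝ, 0 < C ∧ ∀ s : ℕ, 2 ≤ s →
      ∀ g : (Fin s → Bool) → Bool,
        g (fun _ => false) = false →
        (∀ x : Fin s → Bool,
          (Finset.univ.filter (fun i => x i = true)).card = 1 → g x = true) →
        ∃ ℓ : ℕ, 0 < ℓ ∧ (ℓ : ℝ) ≤ C * Real.logb 2 s ∧
          ∃ (k : ℕ) (w : Fin k → ℝ) (S : Fin k → Fin ℓ → Finset (Fin s)),
            (∀ i, 0 ≤ w i) ∧ (∑ i, w i = 1) ∧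
            ∀ a : Fin s → Bool,
              ∑ i ∈ Finset.univ.filter
                  (fun i => ORf ℓ (fun j => g (maskInput a (S i j))) ≠ ORf s a),
                w i ≤ 1/10 := by
  refine ⟨36, by norm_num, fun s hs g hg0 hg1 => ?_⟩
  set T := Nat.log 2 s + 1
  let e := Fintype.equivFin (Fin T × Fin 18 → Fin s → Bool)
  refine ⟨T * 18, by positivity, cast_log_add_one_mul_le_logb hs, _,
    fun i => samplingWeight T s (e.symm i),
    fun i j => univ.filter fun m => e.symm i (finProdFinEquiv.symm j) m = true,
    fun i => samplingWeight_nonneg T s _, ?_, fun a => ?_⟩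
  · rw [Equiv.sum_comp e.symm (samplingWeight T s)]
    exact sum_samplingWeight T s
  · simp only [maskInput_filter_eq]
    rw [sum_filter, ← e.sum_comp]
    simp only [Equiv.symm_apply_apply, ← sum_filter]
    exact sum_samplingWeight_ORf_ne_le (Nat.lt_succ_self _) hg0 hg1 a
end

section
/- There exists an absolute constant a > 0 such that the following holds. Let r ≥ 2 and t ≥ 2, and let g : {0,1}^r × {0,1}^t → {0,1} be such that for every j ∈ [t] there exists a^{(j)} ∈ {0,1}^r with either g(a^{(j)}, b) = b_j for all b ∈ {0,1}^t, or g(a^{(j)}, b) = 1 − b_j for all b ∈ {0,1}^t. Then pdeg(g) ≥ a · log₂ t / log₂ r. -/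
/-!
Majority-of-three amplification, applied four times, turns a `1/3`-error probabilistic polynomial
of degree `d` for `g` into a `1/50`-error one of degree `D = 81 d`. Fix the selectors `a⁽ʲ⁾` and,
for each `h ∈ {0,1}^t`, an input `b` with `g (a⁽ʲ⁾, b) = h j` for all `j`. By averaging, a single
polynomial `P` of degree `≤ D` errs on at most `t/50` of the points `(a⁽ʲ⁾, b)`. On Boolean points
the vector `(P (a⁽ʲ⁾, b))ⱼ` is a combination of the vectors `(∏_{l ∈ S} a⁽ʲ⁾ₗ)ⱼ` with `|S| ≤ D`,
which span a space `V` of dimension at most `(r + 1)^D` not depending on `h`. Hence every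
`h ∈ {0,1}^t` lies in `V` plus a vector supported on `t/50` coordinates. An affine space of
dimension `m` contains at most `2^m` Boolean vectors, so
`2^t ≤ #{E : |E| ≤ t/50} * 2^(dim V + t/50)`, which forces `dim V ≥ 4t/5`, i.e. `t ≤ r^(3D)`.
-/

open scoped Classical

open Finset Module

/-- The multilinear extension of the majority of three bits. -/
def maj3 {R : Type*} [CommRing R] (x y z : R) : R := x * y + y * z + z * x - 2 * x * y * z

theorem IsIdempotentElem.maj3_self_self {R : Type*} [CommRing R] {c : R} (hc : IsIdempotentElem c)
    (z : R) : maj3 c c z = c := by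
  unfold maj3; linear_combination (1 - 2 * z) * hc.eq

/-- The right side is the indicator that at least two of `u, v, z` differ from `c`. -/
theorem ite_maj3_ne_le {c : ℝ} (hc : IsIdempotentElem c) (u v z : ℝ) :
    (if maj3 u v z ≠ c then (1 : ℝ) else 0) ≤
      maj3 (if u ≠ c then 1 else 0) (if v ≠ c then 1 else 0) (if z ≠ c then 1 else 0) := by
  have h01 : (if maj3 u v z ≠ c then (1 : ℝ) else 0) ≤ 1 := by split_ifs <;> norm_num
  by_cases hu : u = c <;> by_cases hv : v = c <;> by_cases hz : z = c <;>
    simp only [hu, hv, hz, ne_eq, not_true_eq_false, not_false_eq_true, if_true, if_false]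
      at h01 ⊢ <;>
    first
    | (rw [hc.maj3_self_self _]; norm_num [maj3])
    | (rw [show maj3 c v c = maj3 c c v by unfold maj3; ring, hc.maj3_self_self _]
       norm_num [maj3])
    | (rw [show maj3 u c c = maj3 c c u by unfold maj3; ring, hc.maj3_self_self _]
       norm_num [maj3])
    | exact h01.trans (by norm_num [maj3])

theorem maj3_self_le_maj3_self {q ε : ℝ} (hq : 0 ≤ q) (hqε : q ≤ ε) (hε : ε ≤ 1) :
    maj3 q q q ≤ maj3 ε ε ε := by
  unfold maj3
  nlinarith [mul_nonneg (mul_nonneg (sub_nonneg.2 hqε) hq) (by linarith : (0 : ℝ) ≤ 3 - 2 * q - ε),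
    mul_nonneg (mul_nonneg (sub_nonneg.2 hqε) (hq.trans hqε))
      (by linarith : (0 : ℝ) ≤ 3 - 2 * ε - q)]

theorem sum_triple_mul {κ R : Type*} [Fintype κ] [CommSemiring R] (A B C : κ → R) :
    ∑ x : κ × κ × κ, A x.1 * B x.2.1 * C x.2.2 = (∑ i, A i) * (∑ i, B i) * (∑ i, C i) := by
  rw [Fintype.sum_prod_type, mul_assoc, sum_mul]
  refine sum_congr rfl fun i _ => ?_
  simp_rw [Fintype.sum_prod_type, sum_mul_sum, mul_sum, mul_assoc]

theorem sum_triple_mul_maj3 {κ : Type*} [Fintype κ] (w χ : κ → ℝ) (hw : ∑ i, w i = 1) :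
    ∑ x : κ × κ × κ, w x.1 * w x.2.1 * w x.2.2 * maj3 (χ x.1) (χ x.2.1) (χ x.2.2) =
      maj3 (∑ i, w i * χ i) (∑ i, w i * χ i) (∑ i, w i * χ i) := by
  obtain ⟨v, hv⟩ : ∃ v : κ → ℝ, v = fun i => w i * χ i := ⟨_, rfl⟩
  have hsplit : ∀ x : κ × κ × κ, w x.1 * w x.2.1 * w x.2.2 * maj3 (χ x.1) (χ x.2.1) (χ x.2.2) =
      v x.1 * v x.2.1 * w x.2.2 + w x.1 * v x.2.1 * v x.2.2 + v x.1 * w x.2.1 * v x.2.2 -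
        2 * (v x.1 * v x.2.1 * v x.2.2) := fun x => by
    subst hv; unfold maj3; ring
  have hq : ∑ i, w i * χ i = ∑ i, v i := by rw [hv]
  rw [sum_congr rfl fun x _ => hsplit x, sum_sub_distrib, sum_add_distrib, sum_add_distrib,
    ← mul_sum, sum_triple_mul, sum_triple_mul, sum_triple_mul, sum_triple_mul, hw, hq]
  unfold maj3
  ring

theorem evalBool_maj3 {ι : Type} (a : ι → Bool) (P Q R : MvPolynomial ι ℝ) :
    evalBool a (maj3 P Q R) = maj3 (evalBool a P) (evalBool a Q) (evalBool a R) := by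
  simp [evalBool, maj3]

theorem totalDegree_maj3_le {ι : Type} {P Q R : MvPolynomial ι ℝ} {d : ℕ}
    (hP : P.totalDegree ≤ d) (hQ : Q.totalDegree ≤ d) (hR : R.totalDegree ≤ d) :
    (maj3 P Q R).totalDegree ≤ 3 * d := by
  have hmul : ∀ {A B : MvPolynomial ι ℝ} {m n : ℕ}, A.totalDegree ≤ m → B.totalDegree ≤ n →
      (A * B).totalDegree ≤ m + n := fun hA hB =>
    (MvPolynomial.totalDegree_mul _ _).trans (add_le_add hA hB)
  have h2 : (2 : MvPolynomial ι ℝ).totalDegree ≤ 0 := by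
    rw [← map_ofNat MvPolynomial.C 2, MvPolynomial.totalDegree_C]
  unfold maj3
  refine (MvPolynomial.totalDegree_sub _ _).trans (max_le ?_ ?_)
  · refine (MvPolynomial.totalDegree_add _ _).trans (max_le ?_ ?_)
    · refine (MvPolynomial.totalDegree_add _ _).trans (max_le ?_ ?_) <;>
        exact (hmul ‹_› ‹_›).trans (by omega)
    · exact (hmul hR hP).trans (by omega)
  · exact (hmul (hmul (hmul h2 hP) hQ) hR).trans (by omega)

noncomputable def cubeIndicator {ι : Type} [Fintype ι] (a : ι → Bool) : MvPolynomial ι ℝ :=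
  ∏ i, if a i then MvPolynomial.X i else 1 - MvPolynomial.X i

theorem evalBool_cubeIndicator {ι : Type} [Fintype ι] (a b : ι → Bool) :
    evalBool b (cubeIndicator a) = if a = b then 1 else 0 := by
  rw [evalBool, cubeIndicator, map_prod]
  trans ∏ i, if a i = b i then (1 : ℝ) else 0
  · exact prod_congr rfl fun i _ => by cases a i <;> cases hb : b i <;> simp [hb]
  · simp [Fintype.prod_boole, funext_iff]

theorem totalDegree_cubeIndicator_le {ι : Type} [Fintype ι] (a : ι → Bool) :
    (cubeIndicator a).totalDegree ≤ Fintype.card ι := by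
  refine (MvPolynomial.totalDegree_finsetProd _ _).trans ?_
  rw [Fintype.card_eq_sum_ones]
  refine sum_le_sum fun i _ => ?_
  split_ifs
  · exact (MvPolynomial.totalDegree_X i).le
  · refine (MvPolynomial.totalDegree_sub _ _).trans ?_
    simp [MvPolynomial.totalDegree_X]

theorem exists_le_of_sum_mul_le {κ : Type*} [Fintype κ] {w a : κ → ℝ} {c : ℝ}
    (hw0 : ∀ i, 0 ≤ w i) (hw1 : ∑ i, w i = 1) (h : ∑ i, w i * a i ≤ c) : ∃ i, a i ≤ c := by
  by_contra! H
  have hsum : ∑ i, w i * (a i - c) ≤ 0 := by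
    simp only [mul_sub, sum_sub_distrib, ← sum_mul, hw1]; linarith
  have hzero := (sum_eq_zero_iff_of_nonneg fun i _ => mul_nonneg (hw0 i) (sub_pos.2 (H i)).le).1
    (hsum.antisymm (sum_nonneg fun i _ => mul_nonneg (hw0 i) (sub_pos.2 (H i)).le))
  have : ∑ i, w i = 0 :=
    sum_eq_zero fun i hi => (mul_eq_zero.1 (hzero i hi)).resolve_right (sub_pos.2 (H i)).ne'
  linarith

section ProbPoly

variable {ι : Type} {f : (ι → Bool) → Bool} {ε ε' : ℝ} {d d' : ℕ}

theorem HasProbPoly.mono (h : HasProbPoly f ε d) (hε : ε ≤ ε') (hd : d ≤ d') :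
    HasProbPoly f ε' d' := by
  obtain ⟨k, w, P, hw0, hw1, hdeg, herr⟩ := h
  exact ⟨k, w, P, hw0, hw1, fun i => (hdeg i).trans hd, fun a => (herr a).trans hε⟩

theorem HasProbPoly.of_fintype {κ : Type} [Fintype κ] (w : κ → ℝ) (P : κ → MvPolynomial ι ℝ)
    (hw0 : ∀ i, 0 ≤ w i) (hw1 : ∑ i, w i = 1) (hdeg : ∀ i, (P i).totalDegree ≤ d)
    (herr : ∀ a, ∑ i ∈ univ.filter (fun i => evalBool a (P i) ≠ if f a then 1 else 0), w i ≤ ε) :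
    HasProbPoly f ε d := by
  let e := (Fintype.equivFin κ).symm
  refine ⟨_, fun i => w (e i), fun i => P (e i), fun i => hw0 _, by rwa [e.sum_comp],
    fun i => hdeg _, fun a => ?_⟩
  have := herr a
  rw [sum_filter] at this ⊢
  exact (e.sum_comp fun i => if evalBool a (P i) ≠ if f a then 1 else 0 then w i else 0).trans_le
    this

theorem HasProbPoly.amplify (h : HasProbPoly f ε d) (hε : ε ≤ 1) :
    HasProbPoly f (maj3 ε ε ε) (3 * d) := by
  obtain ⟨k, w, P, hw0, hw1, hdeg, herr⟩ := h
  refine .of_fintype (κ := Fin k × Fin k × Fin k) (fun x => w x.1 * w x.2.1 * w x.2.2)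
    (fun x => maj3 (P x.1) (P x.2.1) (P x.2.2))
    (fun x => mul_nonneg (mul_nonneg (hw0 _) (hw0 _)) (hw0 _))
    (by rw [sum_triple_mul, hw1]; norm_num)
    (fun x => totalDegree_maj3_le (hdeg _) (hdeg _) (hdeg _)) fun a => ?_
  set c : ℝ := if f a then 1 else 0
  set χ : Fin k → ℝ := fun i => if evalBool a (P i) ≠ c then 1 else 0
  have hc : IsIdempotentElem c := by by_cases hfa : f a <;> simp [c, hfa, IsIdempotentElem]
  have hq0 : 0 ≤ ∑ i, w i * χ i :=
    sum_nonneg fun i _ => mul_nonneg (hw0 i) (by positivity)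
  have hqε : ∑ i, w i * χ i ≤ ε := by
    simpa only [χ, mul_ite, mul_one, mul_zero, ← sum_filter] using herr a
  calc ∑ x ∈ univ.filter (fun x : Fin k × Fin k × Fin k =>
          evalBool a (maj3 (P x.1) (P x.2.1) (P x.2.2)) ≠ c), w x.1 * w x.2.1 * w x.2.2
      = ∑ x : Fin k × Fin k × Fin k, w x.1 * w x.2.1 * w x.2.2 *
          if maj3 (evalBool a (P x.1)) (evalBool a (P x.2.1)) (evalBool a (P x.2.2)) ≠ c
          then 1 else 0 := by
        simp only [sum_filter, mul_ite, mul_one, mul_zero, evalBool_maj3]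
    _ ≤ ∑ x : Fin k × Fin k × Fin k, w x.1 * w x.2.1 * w x.2.2 *
          maj3 (χ x.1) (χ x.2.1) (χ x.2.2) :=
        sum_le_sum fun x _ => mul_le_mul_of_nonneg_left (ite_maj3_ne_le hc _ _ _)
          (mul_nonneg (mul_nonneg (hw0 _) (hw0 _)) (hw0 _))
    _ = maj3 (∑ i, w i * χ i) (∑ i, w i * χ i) (∑ i, w i * χ i) := sum_triple_mul_maj3 w χ hw1
    _ ≤ maj3 ε ε ε := maj3_self_le_maj3_self hq0 hqε hε

theorem HasProbPoly.amplify_le (h : HasProbPoly f ε d) (hε : ε ≤ 1) (hε' : maj3 ε ε ε ≤ ε') :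
    HasProbPoly f ε' (3 * d) :=
  (h.amplify hε).mono hε' le_rfl

theorem HasProbPoly.of_eval (P : MvPolynomial ι ℝ) (hP : ∀ a, evalBool a P = if f a then 1 else 0)
    (hdeg : P.totalDegree ≤ d) (hε : 0 ≤ ε) : HasProbPoly f ε d :=
  ⟨1, fun _ => 1, fun _ => P, fun _ => zero_le_one, by simp, fun _ => hdeg,
    fun a => by simp [hP, hε]⟩

theorem hasProbPoly_card [Fintype ι] (f : (ι → Bool) → Bool) (hε : 0 ≤ ε) :
    HasProbPoly f ε (Fintype.card ι) := by
  refine .of_eval (∑ a ∈ univ.filter (fun a => f a), cubeIndicator a) (fun b => ?_)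
    ((MvPolynomial.totalDegree_finsetSum _ _).trans
      (Finset.sup_le fun a _ => totalDegree_cubeIndicator_le a)) hε
  rw [evalBool, map_sum]
  change ∑ a ∈ _, evalBool b (cubeIndicator a) = _
  simp [evalBool_cubeIndicator]

theorem hasProbPoly_pdeg [Fintype ι] (f : (ι → Bool) → Bool) (hε : 0 ≤ ε) :
    HasProbPoly f ε (pdeg ε f) :=
  Nat.sInf_mem (s := {d | HasProbPoly f ε d}) ⟨_, hasProbPoly_card f hε⟩

theorem hasProbPoly_fiftieth [Fintype ι] (f : (ι → Bool) → Bool) :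
    HasProbPoly f (1 / 50) (81 * pdeg (1 / 3) f) := by
  have h0 := hasProbPoly_pdeg f (ε := 1 / 3) (by norm_num)
  have h1 := h0.amplify_le (ε' := 26 / 100) (by norm_num) (by norm_num [maj3])
  have h2 := h1.amplify_le (ε' := 17 / 100) (by norm_num) (by norm_num [maj3])
  have h3 := h2.amplify_le (ε' := 8 / 100) (by norm_num) (by norm_num [maj3])
  exact (h3.amplify_le (by norm_num) (by norm_num [maj3])).mono le_rfl (by omega)

theorem HasProbPoly.exists_card_errors_le {ι J : Type} [Fintype J] {f : (ι → Bool) → Bool}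
    {ε : ℝ} {d : ℕ} (h : HasProbPoly f ε d) (x : J → ι → Bool) :
    ∃ P : MvPolynomial ι ℝ, P.totalDegree ≤ d ∧
      (#(univ.filter fun j => evalBool (x j) P ≠ if f (x j) then 1 else 0) : ℝ) ≤
        ε * Fintype.card J := by
  obtain ⟨k, w, P, hw0, hw1, hdeg, herr⟩ := h
  suffices hsum : ∑ i, w i * #(univ.filter fun j => evalBool (x j) (P i) ≠
      if f (x j) then 1 else 0) ≤ ε * Fintype.card J by
    obtain ⟨i, hi⟩ := exists_le_of_sum_mul_le hw0 hw1 hsum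
    exact ⟨P i, hdeg i, hi⟩
  calc ∑ i, w i * #(univ.filter fun j => evalBool (x j) (P i) ≠ if f (x j) then 1 else 0)
      = ∑ j, ∑ i ∈ univ.filter (fun i => evalBool (x j) (P i) ≠ if f (x j) then 1 else 0),
          w i := by
        simp only [natCast_card_filter, mul_sum, mul_ite, mul_one, mul_zero, sum_filter]
        exact sum_comm
    _ ≤ ∑ _j : J, ε := sum_le_sum fun j _ => herr (x j)
    _ = ε * Fintype.card J := by rw [sum_const, nsmul_eq_mul, mul_comm, card_univ]

end ProbPoly

def boolVec {ι : Type*} (x : ι → Bool) : ι → ℝ := fun i => if x i then 1 else 0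

theorem card_le_two_pow_finrank {ι : Type*} [Fintype ι] (W : Submodule ℝ (ι → ℝ))
    (S : Finset (ι → Bool)) (hS : ∀ x ∈ S, ∀ y ∈ S, boolVec x - boolVec y ∈ W) :
    #S ≤ 2 ^ finrank ℝ W := by
  induction hn : finrank ℝ W using Nat.strong_induction_on generalizing W S with
  | _ n ih =>
  by_cases hS1 : #S ≤ 1
  · exact hS1.trans Nat.one_le_two_pow
  obtain ⟨x, hx, y, hy, hxy⟩ := one_lt_card.1 (not_le.1 hS1)
  obtain ⟨i, hi⟩ := Function.ne_iff.1 hxy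
  let W' := W ⊓ LinearMap.ker (LinearMap.proj (R := ℝ) (φ := fun _ : ι => ℝ) i)
  have hlt : finrank ℝ W' < n := by
    refine hn ▸ Submodule.finrank_lt_finrank_of_lt (inf_le_left.lt_of_ne fun h => ?_)
    have := (Submodule.mem_inf.1 (h.ge (hS x hx y hy))).2
    cases hxi : x i <;> cases hyi : y i <;> simp_all [boolVec]
  have hfiber : ∀ b : Bool, #(S.filter fun z => z i = b) ≤ 2 ^ (n - 1) := fun b =>
    (ih _ hlt W' _ (fun z hz z' hz' => Submodule.mem_inf.2 ⟨hS z (mem_filter.1 hz).1 z'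
      (mem_filter.1 hz').1, by simp [boolVec, (mem_filter.1 hz).2, (mem_filter.1 hz').2]⟩)
      rfl).trans (Nat.pow_le_pow_right two_pos (by omega))
  calc #S = #(S.filter fun z => z i = true) + #(S.filter fun z => z i = false) := by
        simp_rw [← Bool.not_eq_true]; exact (card_filter_add_card_filter_not _).symm
    _ ≤ 2 ^ (n - 1) + 2 ^ (n - 1) := add_le_add (hfiber true) (hfiber false)
    _ = 2 ^ n := by rw [← two_mul, ← pow_succ']; congr 1; omega

noncomputable def supportedOn {J : Type*} (E : Finset J) : Submodule ℝ (J → ℝ) :=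
  Submodule.span ℝ (Set.range fun j : E => Pi.single (j : J) (1 : ℝ))

theorem mem_supportedOn {J : Type*} [Fintype J] {E : Finset J} {v : J → ℝ}
    (hv : ∀ j ∉ E, v j = 0) : v ∈ supportedOn E := by
  rw [pi_eq_sum_univ' v, ← sum_subset (subset_univ E) fun j _ hj => by simp [hv j hj]]
  exact Submodule.sum_mem _ fun j hj =>
    Submodule.smul_mem _ _ (Submodule.subset_span ⟨⟨j, hj⟩, rfl⟩)

theorem finrank_supportedOn_le {J : Type*} (E : Finset J) : finrank ℝ (supportedOn E) ≤ #E :=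
  (finrank_range_le_card _).trans (Fintype.card_coe E).le

/-- Compare termwise with `∑_E b ^ (n - #E) = (1 + b) ^ n`. -/
theorem card_filter_card_le_mul_pow_le (α : Type*) [Fintype α] (s : ℕ) {b : ℕ} (hb : 0 < b) :
    #(univ.filter fun E : Finset α => #E ≤ s) * b ^ (Fintype.card α - s) ≤
      (1 + b) ^ Fintype.card α := by
  rw [← card_univ, ← sum_pow_mul_eq_add_pow, powerset_univ, ← smul_eq_mul, ← sum_const]
  calc ∑ E ∈ univ.filter fun E : Finset α => #E ≤ s, b ^ (#(univ : Finset α) - s)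
      ≤ ∑ E ∈ univ.filter fun E : Finset α => #E ≤ s, b ^ (#(univ : Finset α) - #E) :=
        sum_le_sum fun E hE => Nat.pow_le_pow_right hb (by have := (mem_filter.1 hE).2; omega)
    _ ≤ ∑ E, 1 ^ #E * b ^ (#(univ : Finset α) - #E) := by
        simp only [one_pow, one_mul]; exact sum_le_sum_of_subset (filter_subset _ _)

theorem two_pow_card_le_of_cover {J : Type*} [Fintype J] (V : Submodule ℝ (J → ℝ)) (s : ℕ)
    (hcov : ∀ h : J → Bool, ∃ E : Finset J, #E ≤ s ∧ boolVec h ∈ V ⊔ supportedOn E) :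
    2 ^ Fintype.card J ≤ #(univ.filter fun E : Finset J => #E ≤ s) * 2 ^ (finrank ℝ V + s) := by
  choose E hEs hmem using hcov
  calc 2 ^ Fintype.card J = #(univ : Finset (J → Bool)) := by simp
    _ = ∑ F ∈ univ.filter (fun E : Finset J => #E ≤ s), #(univ.filter fun h => E h = F) :=
        card_eq_sum_card_fiberwise fun h _ => mem_filter.2 ⟨mem_univ _, hEs h⟩
    _ ≤ ∑ _F ∈ univ.filter (fun E : Finset J => #E ≤ s), 2 ^ (finrank ℝ V + s) :=
        sum_le_sum fun F hF => ?_
    _ = _ := by rw [sum_const, smul_eq_mul]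
  refine (card_le_two_pow_finrank (V ⊔ supportedOn F) _ fun h hh h' hh' => ?_).trans
    (Nat.pow_le_pow_right two_pos ?_)
  · have hmemF : ∀ h ∈ univ.filter (fun h => E h = F), boolVec h ∈ V ⊔ supportedOn F :=
      fun h hh => (mem_filter.1 hh).2 ▸ hmem h
    exact sub_mem (hmemF h hh) (hmemF h' hh')
  · calc finrank ℝ ↥(V ⊔ supportedOn F) ≤ finrank ℝ V + finrank ℝ (supportedOn F) :=
          Submodule.finrank_add_le_finrank_add_finrank _ _
      _ ≤ finrank ℝ V + s := by
          have := finrank_supportedOn_le F; have := (mem_filter.1 hF).2; omega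

theorem card_filter_card_le_le_pow (α : Type*) [Fintype α] (D : ℕ) :
    #(univ.filter fun S : Finset α => #S ≤ D) ≤ (Fintype.card α + 1) ^ D := by
  induction D with
  | zero => simp [card_eq_zero, filter_eq']
  | succ D ih =>
    calc #(univ.filter fun S : Finset α => #S ≤ D + 1)
        ≤ #((univ ×ˢ univ.filter fun S : Finset α => #S ≤ D).image
            fun p : Option α × Finset α => p.1.elim p.2 (insert · p.2)) := by
          refine card_le_card fun S hS => mem_image.2 ?_
          rcases (mem_filter.1 hS).2.lt_or_eq with hlt | heq
          · exact ⟨(none, S), by simp; omega, rfl⟩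
          · obtain ⟨a, ha⟩ : S.Nonempty := card_pos.1 (by omega)
            exact ⟨(some a, S.erase a), by simp [card_erase_of_mem ha, heq],
              by simp [insert_erase ha]⟩
      _ ≤ (Fintype.card α + 1) * (Fintype.card α + 1) ^ D := by
          refine card_image_le.trans ?_
          rw [card_product, card_univ, Fintype.card_option]
          exact Nat.mul_le_mul_left _ ih
      _ = (Fintype.card α + 1) ^ (D + 1) := (pow_succ' _ _).symm

/-- On Boolean points a monomial with support `S` agrees with `∏_{l ∈ S} x l`, so this span
contains the evaluation vectors of all polynomials of degree at most `D`. -/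
noncomputable def monomialSpan {J α : Type*} (Y : J → α → Bool) (D : ℕ) : Submodule ℝ (J → ℝ) :=
  Submodule.span ℝ
    (Set.range fun S : {S : Finset α // #S ≤ D} =>
      fun j => if ∀ l ∈ S.1, Y j l then (1 : ℝ) else 0)

theorem finrank_monomialSpan_le {J α : Type*} [Fintype α] (Y : J → α → Bool) (D : ℕ) :
    finrank ℝ (monomialSpan Y D) ≤ (Fintype.card α + 1) ^ D :=
  (finrank_range_le_card _).trans
    ((Fintype.card_subtype _).trans_le (card_filter_card_le_le_pow α D))

theorem evalBool_eq_sum {ι : Type} (x : ι → Bool) (P : MvPolynomial ι ℝ) :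
    evalBool x P = ∑ m ∈ P.support, P.coeff m * if ∀ i ∈ m.support, x i then 1 else 0 := by
  rw [evalBool, MvPolynomial.eval_eq]
  refine sum_congr rfl fun m _ => congrArg _ ?_
  rw [← prod_boole]
  refine prod_congr rfl fun i hi => ?_
  split_ifs <;> simp [Finsupp.mem_support_iff.1 hi]

theorem card_support_le_totalDegree {ι R : Type*} [CommSemiring R] {P : MvPolynomial ι R}
    {m : ι →₀ ℕ} (hm : m ∈ P.support) : #m.support ≤ P.totalDegree := by
  refine le_trans ?_ (MvPolynomial.le_totalDegree hm)
  simpa [Finsupp.sum] using card_nsmul_le_sum m.support m 1 fun i hi =>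
    Nat.one_le_iff_ne_zero.2 (Finsupp.mem_support_iff.1 hi)

theorem evalBool_mem_monomialSpan {ι J : Type} (x : J → ι → Bool) {P : MvPolynomial ι ℝ} {D : ℕ}
    (hP : P.totalDegree ≤ D) : (fun j => evalBool (x j) P) ∈ monomialSpan x D := by
  have : (fun j => evalBool (x j) P) = ∑ m ∈ P.support,
      P.coeff m • fun j => if ∀ i ∈ m.support, x j i then (1 : ℝ) else 0 := by
    funext j; simp [evalBool_eq_sum, Finset.sum_apply]
  rw [this]
  exact Submodule.sum_mem _ fun m hm => Submodule.smul_mem _ _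
    (Submodule.subset_span ⟨⟨m.support, (card_support_le_totalDegree hm).trans hP⟩, rfl⟩)

theorem monomialSpan_append_le {J : Type} {r t : ℕ} (Y : J → Fin r → Bool) (b : Fin t → Bool)
    (D : ℕ) : monomialSpan (fun j => Fin.append (Y j) b) D ≤ monomialSpan Y D := by
  refine Submodule.span_le.2 ?_
  rintro _ ⟨⟨S, hS⟩, rfl⟩
  let S' := univ.filter fun l => Fin.castAdd t l ∈ S
  have hS' : #S' ≤ D := (card_le_card_of_injOn (Fin.castAdd t) (fun l hl => (mem_filter.1 hl).2)
    (Fin.castAdd_injective r t).injOn).trans hS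
  rw [SetLike.mem_coe]
  convert Submodule.smul_mem (monomialSpan Y D)
    (if ∀ k, Fin.natAdd r k ∈ S → b k = true then (1 : ℝ) else 0)
    (Submodule.subset_span ⟨⟨S', hS'⟩, rfl⟩) using 1
  funext j
  simp [S', Fin.forall_fin_add, ite_and]

theorem exists_append_eq_of_pseudoaddressing {r t : ℕ} {g : (Fin (r + t) → Bool) → Bool}
    (hg : ∀ j : Fin t, ∃ y : Fin r → Bool,
      (∀ b : Fin t → Bool, g (Fin.append y b) = b j) ∨
      (∀ b : Fin t → Bool, g (Fin.append y b) = !(b j))) :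
    ∃ (Y : Fin t → Fin r → Bool) (β : (Fin t → Bool) → Fin t → Bool),
      ∀ h j, g (Fin.append (Y j) (β h)) = h j := by
  choose Y hY using hg
  refine ⟨Y, fun h k => if ∀ b : Fin t → Bool, g (Fin.append (Y k) b) = b k then h k else !h k,
    fun h j => ?_⟩
  by_cases hj : ∀ b : Fin t → Bool, g (Fin.append (Y j) b) = b j
  · simp [hj]
  · simp [(hY j).resolve_left hj]

theorem boolVec_mem_monomialSpan_sup_supportedOn {r t : ℕ} {J : Type} [Fintype J]
    {g : (Fin (r + t) → Bool) → Bool} {Y : J → Fin r → Bool} {β : (J → Bool) → Fin t → Bool}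
    (hY : ∀ h j, g (Fin.append (Y j) (β h)) = h j) {ε : ℝ} {D : ℕ} (hP : HasProbPoly g ε D)
    (h : J → Bool) :
    ∃ E : Finset J, (#E : ℝ) ≤ ε * Fintype.card J ∧
      boolVec h ∈ monomialSpan Y D ⊔ supportedOn E := by
  obtain ⟨P, hdeg, hcard⟩ := hP.exists_card_errors_le fun j => Fin.append (Y j) (β h)
  refine ⟨_, hcard, ?_⟩
  rw [← add_sub_cancel (fun j => evalBool (Fin.append (Y j) (β h)) P) (boolVec h)]
  refine Submodule.add_mem_sup
    (monomialSpan_append_le Y (β h) D (evalBool_mem_monomialSpan _ hdeg)) (mem_supportedOn ?_)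
  intro j hj
  simp only [mem_filter, mem_univ, true_and, not_not, hY] at hj
  simp [boolVec, hj]

theorem four_mul_le_five_mul_of_two_pow_le {t s m N : ℕ} (hcount : 2 ^ t ≤ N * 2 ^ (m + s))
    (hN : N * 16 ^ (t - s) ≤ 17 ^ t) (hs : 50 * s ≤ t) : 4 * t ≤ 5 * m := by
  have h1 : 2 ^ (5 * t - 4 * s) ≤ 17 ^ t * 2 ^ (m + s) :=
    calc 2 ^ (5 * t - 4 * s) = 2 ^ t * 16 ^ (t - s) := by
          rw [show (16 : ℕ) = 2 ^ 4 by norm_num, ← pow_mul, ← pow_add]; congr 1; omega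
      _ ≤ N * 16 ^ (t - s) * 2 ^ (m + s) := by
          rw [mul_right_comm]; exact Nat.mul_le_mul_right _ hcount
      _ ≤ 17 ^ t * 2 ^ (m + s) := Nat.mul_le_mul_right _ hN
  -- `17 ^ 10 ≤ 2 ^ 41` turns the tenth power of `h1` into a comparison of powers of two.
  have h2 : 2 ^ (10 * (5 * t - 4 * s)) ≤ 2 ^ (41 * t + 10 * (m + s)) :=
    calc 2 ^ (10 * (5 * t - 4 * s)) = (2 ^ (5 * t - 4 * s)) ^ 10 := by rw [← pow_mul, mul_comm]
      _ ≤ (17 ^ t * 2 ^ (m + s)) ^ 10 := Nat.pow_le_pow_left h1 10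
      _ = (17 ^ 10) ^ t * 2 ^ (10 * (m + s)) := by
          rw [mul_pow, ← pow_mul, ← pow_mul, ← pow_mul, mul_comm t 10, mul_comm (m + s) 10]
      _ ≤ (2 ^ 41) ^ t * 2 ^ (10 * (m + s)) :=
          Nat.mul_le_mul_right _ (Nat.pow_le_pow_left (by norm_num) t)
      _ = 2 ^ (41 * t + 10 * (m + s)) := by rw [← pow_mul, pow_add]
  have := (Nat.pow_le_pow_iff_right (by norm_num)).1 h2
  omega

theorem le_pow_of_four_mul_le {r t D : ℕ} (hr : 2 ≤ r) (h : 4 * t ≤ 5 * (r + 1) ^ D) :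
    t ≤ r ^ (3 * D) := by
  rcases Nat.eq_zero_or_pos D with rfl | hD
  · simp at h ⊢; omega
  have : 1 ≤ (r + 1) ^ D := Nat.one_le_pow _ _ (by omega)
  calc t ≤ 2 * (r + 1) ^ D := by omega
    _ ≤ r * (r ^ 2) ^ D := Nat.mul_le_mul hr (Nat.pow_le_pow_left (by nlinarith) D)
    _ = r ^ (2 * D + 1) := by ring
    _ ≤ r ^ (3 * D) := Nat.pow_le_pow_right (by omega) (by omega)

theorem logb_div_logb_le_of_le_pow {r t n : ℕ} (hr : 2 ≤ r) (ht : 0 < t) (h : t ≤ r ^ n) :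
    Real.logb 2 t / Real.logb 2 r ≤ n := by
  have hr' : 0 < Real.logb 2 r := Real.logb_pos (by norm_num) (by exact_mod_cast hr)
  rw [div_le_iff₀ hr', ← Real.logb_pow]
  exact Real.logb_le_logb_of_le (by norm_num) (by exact_mod_cast ht) (by exact_mod_cast h)

theorem pseudoaddressing_lower_bound :
    ∃ a : ℝ, 0 < a ∧ ∀ r t : ℕ, 2 ≤ r → 2 ≤ t →
      ∀ g : (Fin (r + t) → Bool) → Bool,
        (∀ j : Fin t, ∃ y : Fin r → Bool,
          (∀ b : Fin t → Bool, g (Fin.append y b) = b j) ∨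
          (∀ b : Fin t → Bool, g (Fin.append y b) = !(b j))) →
        a * Real.logb 2 t / Real.logb 2 r ≤ (pdeg (1/3) g : ℝ) := by
  refine ⟨1 / 243, by norm_num, fun r t hr ht g hg => ?_⟩
  obtain ⟨Y, β, hY⟩ := exists_append_eq_of_pseudoaddressing hg
  set d := pdeg (1/3) g
  have hcover : ∀ h : Fin t → Bool, ∃ E : Finset (Fin t), #E ≤ t / 50 ∧
      boolVec h ∈ monomialSpan Y (81 * d) ⊔ supportedOn E := fun h => by
    obtain ⟨E, hE, hmem⟩ :=
      boolVec_mem_monomialSpan_sup_supportedOn hY (hasProbPoly_fiftieth g) h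
    refine ⟨E, (Nat.le_div_iff_mul_le (by norm_num)).2 ?_, hmem⟩
    simp only [Fintype.card_fin] at hE
    exact_mod_cast (by linarith : (#E : ℝ) * 50 ≤ t)
  have hdim := four_mul_le_five_mul_of_two_pow_le (two_pow_card_le_of_cover _ _ hcover)
    (card_filter_card_le_mul_pow_le (Fin t) _ (by norm_num)) (by simpa using Nat.mul_div_le t 50)
  simp only [Fintype.card_fin] at hdim
  have htr : t ≤ r ^ (3 * (81 * d)) := le_pow_of_four_mul_le hr
    (hdim.trans (Nat.mul_le_mul_left 5 ((finrank_monomialSpan_le Y _).trans_eq (by simp))))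
  have := logb_div_logb_le_of_le_pow hr (by omega) htr
  push_cast at this
  rw [mul_div_assoc]
  linarith
end

section
/- Let m ≥ 2, d ≥ 1 and M be positive integers with M > m^{10d}, and let X ⊆ {0,1}^m with |X| = M. Then the number of functions g : X → {0,1} for which there exists a real polynomial P in m variables of total degree at most d agreeing with g on at least 9M/10 points of X is at most 2^{9M/10}. -/
open scoped Classical

/-!
On the points of `X`, a polynomial of degree at most `d` is a linear combination of the
multilinear monomials `∏ i ∈ S, x i` with `#S ≤ d`, so it lies in a space `V` of functions
`X → ℝ` of dimension `D < m ^ (d + 1)`. A `{0,1}`-vector of `V` is determined by its values on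
`D` suitable coordinates, so a bad `g` is determined by a set of `M - ⌊M/10⌋` points on which
it agrees with `V`, by `D` bits, and by its `⌊M/10⌋` remaining values. This gives at most
`C(M, ⌊M/10⌋) * 2 ^ (D + ⌊M/10⌋)` bad functions, and `D` is negligible next to `M`.
-/

open Finset Module

-- The evaluations at the points of `T` form a basis, chosen among the evaluations at points
-- of `A`, of their span in the dual of `V`.
theorem Submodule.exists_finset_card_le_finrank_eqOn_zero {K α : Type*} [Field K]
    (V : Submodule K (α → K)) [FiniteDimensional K V] (A : Set α) :
    ∃ T : Finset α, ↑T ⊆ A ∧ #T ≤ finrank K V ∧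
      ∀ v ∈ V, Set.EqOn v 0 T → Set.EqOn v 0 A := by
  let ev : A → Dual K V := fun x => (LinearMap.proj (x : α)).comp V.subtype
  obtain ⟨κ, a, -, hspan, hli⟩ := exists_linearIndependent' K ev
  have : Fintype κ := @Fintype.ofFinite _ hli.finite
  refine ⟨univ.image fun i => (a i : α), ?_, ?_, ?_⟩
  · simp [Set.subset_def]
  · exact card_image_le.trans (hli.fintype_card_le_finrank.trans_eq Subspace.dual_finrank_eq)
  · intro v hv hT x hx
    have hle : span K (Set.range (ev ∘ a)) ≤ LinearMap.ker (Dual.eval K V ⟨v, hv⟩) :=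
      Submodule.span_le.mpr <| by
        rintro _ ⟨i, rfl⟩
        exact hT (mem_image_of_mem _ (mem_univ i))
    have hx : ev ⟨x, hx⟩ ∈ span K (Set.range (ev ∘ a)) :=
      hspan ▸ subset_span (Set.mem_range_self _)
    simpa [ev] using hle hx

section BooleanPointsOfSubspace

variable {K α β : Type*} [Field K] [Fintype α] [DecidableEq α] [Fintype β] [Nonempty β]
  {f : β → K}

theorem card_filter_eqOn_submodule_le (hf : Function.Injective f) (V : Submodule K (α → K))
    (A : Finset α) :
    #{w : α → β | ∃ v ∈ V, ∀ x ∈ A, v x = f (w x)} ≤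
      Fintype.card β ^ (finrank K V + (Fintype.card α - #A)) := by
  obtain ⟨T, hTA, hTcard, hT⟩ := V.exists_finset_card_le_finrank_eqOn_zero A
  let restrict : (α → β) → ((T ∪ Aᶜ : Finset α) → β) := fun w x => w x
  have hinj : Set.InjOn restrict {w | ∃ v ∈ V, ∀ x ∈ A, v x = f (w x)} := by
    rintro w ⟨v, hv, hvw⟩ w' ⟨v', hv', hvw'⟩ hww'
    have hagree : ∀ x ∈ T ∪ Aᶜ, w x = w' x := fun x hx => congrFun hww' ⟨x, hx⟩
    have hdiff : Set.EqOn (v - v') 0 A := by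
      refine hT _ (V.sub_mem hv hv') fun x hx => ?_
      have hxA : x ∈ A := hTA hx
      simp [hvw x hxA, hvw' x hxA, hagree x (mem_union_left _ hx)]
    funext x
    by_cases hxA : x ∈ A
    · refine hf ?_
      rw [← hvw x hxA, ← hvw' x hxA]
      simpa [sub_eq_zero] using hdiff (mem_coe.mpr hxA)
    · exact hagree x (mem_union_right _ (mem_compl.mpr hxA))
  calc #{w : α → β | ∃ v ∈ V, ∀ x ∈ A, v x = f (w x)}
      ≤ Fintype.card ((T ∪ Aᶜ : Finset α) → β) :=
        card_le_card_of_injOn restrict (fun _ _ => mem_univ _) (by simpa using hinj)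
    _ = Fintype.card β ^ #(T ∪ Aᶜ) := by rw [Fintype.card_fun, Fintype.card_coe]
    _ ≤ Fintype.card β ^ (finrank K V + (Fintype.card α - #A)) := by
        refine Nat.pow_le_pow_right Fintype.card_pos ?_
        calc #(T ∪ Aᶜ) ≤ #T + #Aᶜ := card_union_le _ _
          _ ≤ _ := by rw [card_compl]; omega

theorem card_filter_agree_submodule_le [DecidableEq K] (hf : Function.Injective f)
    (V : Submodule K (α → K)) (s : ℕ) :
    #{w : α → β | ∃ v ∈ V, s ≤ #{x | v x = f (w x)}} ≤
      (Fintype.card α).choose s * Fintype.card β ^ (finrank K V + (Fintype.card α - s)) := by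
  have hcover : ({w : α → β | ∃ v ∈ V, s ≤ #{x | v x = f (w x)}} : Finset (α → β)) ⊆
      (powersetCard s univ).biUnion fun A =>
        {w : α → β | ∃ v ∈ V, ∀ x ∈ A, v x = f (w x)} := by
    intro w hw
    obtain ⟨v, hv, hs⟩ := (mem_filter.mp hw).2
    obtain ⟨A, hA, rfl⟩ := exists_subset_card_eq hs
    exact mem_biUnion.mpr ⟨A, mem_powersetCard.mpr ⟨subset_univ A, rfl⟩,
      mem_filter.mpr ⟨mem_univ w, v, hv, fun x hx => (mem_filter.mp (hA hx)).2⟩⟩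
  calc _ ≤ _ := card_le_card hcover
    _ ≤ ∑ A ∈ powersetCard s univ,
          #{w : α → β | ∃ v ∈ V, ∀ x ∈ A, v x = f (w x)} := card_biUnion_le
    _ ≤ #(powersetCard s (univ : Finset α)) *
          Fintype.card β ^ (finrank K V + (Fintype.card α - s)) := by
        refine sum_le_card_nsmul _ _ _ fun A hA => ?_
        rw [← (mem_powersetCard.mp hA).2]
        exact card_filter_eqOn_submodule_le hf V A
    _ = _ := by rw [card_powersetCard, card_univ]

end BooleanPointsOfSubspace

noncomputable def cubeMonomial {σ : Type*} (S : Finset σ) (a : σ → Bool) : ℝ :=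
  ∏ i ∈ S, if a i then 1 else 0

-- On `{0,1}`-points every positive power of a variable equals the variable itself.
theorem evalBool_eq_sum_coeff_mul_cubeMonomial {σ : Type} (P : MvPolynomial σ ℝ)
    (a : σ → Bool) :
    evalBool a P = ∑ μ ∈ P.support, P.coeff μ * cubeMonomial μ.support a := by
  rw [evalBool, MvPolynomial.eval_eq]
  refine sum_congr rfl fun μ _ => congrArg _ (prod_congr rfl fun i hi => ?_)
  have hμi : μ i ≠ 0 := Finsupp.mem_support_iff.mp hi
  cases a i <;> simp [hμi]

theorem evalBool_mem_span_cubeMonomial {α σ : Type} (p : α → σ → Bool) {d : ℕ}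
    {P : MvPolynomial σ ℝ} (hP : P.totalDegree ≤ d) :
    (fun x => evalBool (p x) P) ∈ Submodule.span ℝ
      (Set.range fun S : {S : Finset σ // #S ≤ d} => fun x => cubeMonomial S.1 (p x)) := by
  have hsum : (fun x => evalBool (p x) P) =
      ∑ μ ∈ P.support, P.coeff μ • fun x => cubeMonomial μ.support (p x) := by
    funext x
    simp [evalBool_eq_sum_coeff_mul_cubeMonomial]
  rw [hsum]
  refine Submodule.sum_mem _ fun μ hμ => Submodule.smul_mem _ _ (Submodule.subset_span ?_)
  have hcard : #μ.support ≤ d := calc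
    #μ.support ≤ μ.sum fun _ e => e := by
      simpa [Finsupp.sum] using card_nsmul_le_sum μ.support μ 1 fun i hi =>
        Nat.one_le_iff_ne_zero.mpr (Finsupp.mem_support_iff.mp hi)
    _ ≤ d := (MvPolynomial.le_totalDegree hμ).trans hP
  exact ⟨⟨μ.support, hcard⟩, rfl⟩

theorem card_subtype_card_le_lt_pow {σ : Type*} [Fintype σ] (hσ : 2 ≤ Fintype.card σ) (d : ℕ) :
    Fintype.card {S : Finset σ // #S ≤ d} < Fintype.card σ ^ (d + 1) := by
  rw [Fintype.card_subtype]
  calc #{S : Finset σ | #S ≤ d}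
      ≤ #((range (d + 1)).biUnion fun k => powersetCard k (univ : Finset σ)) :=
        card_le_card fun S hS => mem_biUnion.mpr
          ⟨#S, mem_range.mpr (Nat.lt_succ_of_le (mem_filter.mp hS).2),
            mem_powersetCard.mpr ⟨subset_univ S, rfl⟩⟩
    _ ≤ ∑ k ∈ range (d + 1), (Fintype.card σ).choose k :=
        card_biUnion_le.trans_eq (by simp)
    _ ≤ ∑ k ∈ range (d + 1), Fintype.card σ ^ k :=
        sum_le_sum fun k _ => Nat.choose_le_pow _ _
    _ < Fintype.card σ ^ (d + 1) := Nat.geomSum_lt hσ fun k hk => mem_range.mp hk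

theorem exists_card_agree_polynomial_le {α σ : Type} [Fintype α] [Fintype σ]
    (hσ : 2 ≤ Fintype.card σ) (p : α → σ → Bool) (d s : ℕ) :
    ∃ D < Fintype.card σ ^ (d + 1),
      Nat.card {g : α → Bool // ∃ P : MvPolynomial σ ℝ, P.totalDegree ≤ d ∧
          s ≤ #{x | evalBool (p x) P = if g x then 1 else 0}} ≤
        (Fintype.card α).choose s * 2 ^ (D + (Fintype.card α - s)) := by
  let V := Submodule.span ℝ
    (Set.range fun S : {S : Finset σ // #S ≤ d} => fun x => cubeMonomial S.1 (p x))
  have hind : Function.Injective fun b : Bool => if b then (1 : ℝ) else 0 := by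
    intro a b; cases a <;> cases b <;> simp
  refine ⟨finrank ℝ V, (finrank_range_le_card _).trans_lt (card_subtype_card_le_lt_pow hσ d), ?_⟩
  refine le_trans ?_ (by simpa using card_filter_agree_submodule_le hind V s)
  rw [Nat.card_eq_fintype_card, Fintype.card_subtype]
  refine card_le_card (monotone_filter_right _ ?_)
  rintro g - ⟨P, hP, hs⟩
  exact ⟨_, evalBool_mem_span_cubeMonomial p hP, hs⟩

theorem choose_mul_pow_mul_pow_le_add_pow (a b n k : ℕ) :
    n.choose k * a ^ k * b ^ (n - k) ≤ (a + b) ^ n := by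
  rcases le_or_gt k n with hkn | hnk
  · rw [add_pow]
    calc n.choose k * a ^ k * b ^ (n - k) = a ^ k * b ^ (n - k) * n.choose k := by ring
      _ ≤ _ := single_le_sum (f := fun i => a ^ i * b ^ (n - i) * n.choose i)
          (fun _ _ => Nat.zero_le _) (mem_range.mpr (Nat.lt_succ_of_le hkn))
  · simp [Nat.choose_eq_zero_of_lt hnk]

theorem ten_pow_mul_two_pow_le_eighteen_pow {M D : ℕ} (hD : D + 1 ≤ 3 * (M / 10)) :
    10 ^ M * 2 ^ (D + M / 10 + 1) ≤ 18 ^ (M - M / 10) := by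
  set q := M / 10
  obtain ⟨r, hM, -⟩ : ∃ r, M = 10 * q + r ∧ r < 10 := ⟨M % 10, by omega, by omega⟩
  calc 10 ^ M * 2 ^ (D + q + 1) ≤ 10 ^ M * 2 ^ (4 * q) :=
        Nat.mul_le_mul_left _ (Nat.pow_le_pow_right two_pos (by omega))
    _ = (10 ^ 10 * 2 ^ 4) ^ q * 10 ^ r := by rw [hM, mul_pow, ← pow_mul, ← pow_mul]; ring
    _ ≤ (18 ^ 9) ^ q * 18 ^ r := by gcongr <;> norm_num
    _ = 18 ^ (M - q) := by rw [show M - q = 9 * q + r by omega, ← pow_mul]; ring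

theorem choose_div_ten_mul_two_pow_le {M D : ℕ} (hD : D + 1 ≤ 3 * (M / 10)) :
    M.choose (M / 10) * 2 ^ (D + M / 10) ≤ 2 ^ (M - M / 10 - 1) := by
  set q := M / 10
  have hbinom : M.choose q * 1 ^ q * 9 ^ (M - q) ≤ 10 ^ M :=
    choose_mul_pow_mul_pow_le_add_pow 1 9 M q
  have hcount := ten_pow_mul_two_pow_le_eighteen_pow hD
  refine Nat.le_of_mul_le_mul_right (c := 2 * 9 ^ (M - q)) ?_ (by positivity)
  calc M.choose q * 2 ^ (D + q) * (2 * 9 ^ (M - q))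
      = M.choose q * 1 ^ q * 9 ^ (M - q) * 2 ^ (D + q + 1) := by ring
    _ ≤ 10 ^ M * 2 ^ (D + q + 1) := Nat.mul_le_mul_right _ hbinom
    _ ≤ 18 ^ (M - q) := hcount
    _ = 2 ^ (M - q - 1) * (2 * 9 ^ (M - q)) := by
        obtain ⟨n, hn⟩ : ∃ n, M - q = n + 1 := ⟨M - q - 1, by omega⟩
        rw [hn, Nat.add_sub_cancel, show (18 : ℕ) = 2 * 9 from rfl, mul_pow]; ring

theorem add_one_le_three_mul_div_ten {m d D M : ℕ} (hm : 2 ≤ m) (hd : 1 ≤ d)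
    (hD : D < m ^ (d + 1)) (hM : m ^ (10 * d) < M) : D + 1 ≤ 3 * (M / 10) := by
  have hdd : m ^ (d + 1) ≤ m ^ (2 * d) := Nat.pow_le_pow_right (by omega) (by omega)
  have h16 : 16 * m ^ (2 * d) ≤ m ^ (10 * d) := by
    have h2 : 2 ^ 4 ≤ (m ^ (2 * d)) ^ 4 :=
      Nat.pow_le_pow_left (le_self_pow₀ (by omega) (by omega) |>.trans' hm) 4
    calc 16 * m ^ (2 * d) ≤ (m ^ (2 * d)) ^ 4 * m ^ (2 * d) := Nat.mul_le_mul_right _ h2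
      _ = m ^ (10 * d) := by rw [← pow_succ, ← pow_mul]; ring_nf
  omega

theorem sub_div_ten_le_of_nine_mul_div_ten_le {M c : ℕ} (h : 9 * (M : ℝ) / 10 ≤ c) :
    M - M / 10 ≤ c := by
  have : 9 * M ≤ 10 * c := by exact_mod_cast (by linarith : 9 * (M : ℝ) ≤ 10 * c)
  omega

theorem two_pow_sub_div_ten_sub_one_le (M : ℕ) :
    (2 : ℝ) ^ (M - M / 10 - 1) ≤ 2 ^ (9 * (M : ℝ) / 10) := by
  have hexp : (10 : ℝ) * (M - M / 10 - 1 : ℕ) ≤ 9 * M := by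
    exact_mod_cast (by omega : 10 * (M - M / 10 - 1) ≤ 9 * M)
  rw [← Real.rpow_natCast]
  exact Real.rpow_le_rpow_of_exponent_le one_le_two (by linarith)

theorem counting_bad_functions (m d M : ℕ) (hm : 2 ≤ m) (hd : 1 ≤ d)
    (hM : m ^ (10 * d) < M)
    (X : Finset (Fin m → Bool)) (hX : X.card = M) :
    (Nat.card {g : {x // x ∈ X} → Bool //
        ∃ P : MvPolynomial (Fin m) ℝ, P.totalDegree ≤ d ∧
          9 * (M : ℝ) / 10 ≤
            ((Finset.univ.filter (fun x : {x // x ∈ X} =>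
              evalBool (x : Fin m → Bool) P = (if g x then (1:ℝ) else 0))).card : ℝ)} : ℝ)
      ≤ 2 ^ (9 * (M : ℝ) / 10) := by
  have hqM : M / 10 ≤ M := Nat.div_le_self M 10
  obtain ⟨D, hD, hcount⟩ := exists_card_agree_polynomial_le (by simpa using hm)
    (fun x : {x // x ∈ X} => (x : Fin m → Bool)) d (M - M / 10)
  rw [Fintype.card_coe, hX, Nat.choose_symm hqM, Nat.sub_sub_self hqM] at hcount
  rw [Fintype.card_fin] at hD
  have hbound := hcount.trans
    (choose_div_ten_mul_two_pow_le (add_one_le_three_mul_div_ten hm hd hD hM))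
  refine le_trans (Nat.cast_le.mpr
    ((Finite.card_le_of_embedding (Subtype.impEmbedding _ _ ?_)).trans hbound)) ?_
  · rintro g ⟨P, hP, hagree⟩
    exact ⟨P, hP, sub_div_ten_le_of_nine_mul_div_ten_le hagree⟩
  · exact_mod_cast two_pow_sub_div_ten_sub_one_le M
end

section
/- Let A be a p × q matrix with all entries in {0,1} and let b ∈ {0,1}^p. If the linear system A·x = b has a solution x ∈ ℝ^q, then it has a rational solution x ∈ ℚ^q in which every coordinate can be written as a ratio of two integers each of absolute value at most 2^{5q²}. -/
/-!
A `ℚ`-linear retraction `ℝ → ℚ`, applied coordinatewise, turns a real solution into a rational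
one. Among rational solutions take a basic one: keep a maximal linearly independent set of
`r ≤ q` columns, and `r` rows on which they form an invertible square submatrix `N`. The solution
is `N⁻¹ b` on the chosen columns and `0` elsewhere, so by Cramer's rule each coordinate is a
quotient of determinants of `r × r` matrices with entries in `{0, 1}`, which are integers of
absolute value at most `r! ≤ 2 ^ q ^ 2`.
-/

open Matrix Module Submodule Set Function
open scoped Nat

theorem Matrix.exists_mulVec_eq_of_exists_map_algebraMap_mulVec_eq
    {K L m n : Type*} [Field K] [Field L] [Algebra K L] [Fintype n]
    (M : Matrix m n K) (b : m → K)
    (h : ∃ x : n → L, M.map (algebraMap K L) *ᵥ x = algebraMap K L ∘ b) :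
    ∃ x : n → K, M *ᵥ x = b := by
  obtain ⟨x, hx⟩ := h
  obtain ⟨g, hg⟩ := (Algebra.linearMap K L).exists_leftInverse_of_injective
    (LinearMap.ker_eq_bot.mpr (FaithfulSMul.algebraMap_injective K L))
  have hg_algebraMap (c : K) : g (algebraMap K L c) = c := LinearMap.congr_fun hg c
  refine ⟨g ∘ x, funext fun i => ?_⟩
  calc (M *ᵥ (g ∘ x)) i = g ((M.map (algebraMap K L) *ᵥ x) i) := by
        simp [mulVec, dotProduct, map_sum, ← Algebra.smul_def]
    _ = b i := by rw [hx, Function.comp_apply, hg_algebraMap]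

theorem exists_fin_linearIndependent_span_eq {K V ι : Type*} [DivisionRing K] [AddCommGroup V]
    [Module K V] [Finite ι] (v : ι → V) :
    ∃ (r : ℕ) (a : Fin r → ι), Injective a ∧
      span K (range (v ∘ a)) = span K (range v) ∧ LinearIndependent K (v ∘ a) := by
  obtain ⟨κ, a, ha, hspan, hli⟩ := exists_linearIndependent' K v
  have : Finite κ := Finite.of_injective a ha
  let σ := (Finite.equivFin κ).symm
  refine ⟨_, a ∘ σ, ha.comp σ.injective, ?_, hli.comp σ σ.injective⟩
  rwa [← comp_assoc, EquivLike.range_comp]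

theorem Matrix.exists_det_submatrix_ne_zero_of_linearIndependent_col
    {K m : Type*} [Field K] [Fintype m] {r : ℕ} (M : Matrix m (Fin r) K)
    (hM : LinearIndependent K M.col) : ∃ e : Fin r → m, (M.submatrix e id).det ≠ 0 := by
  have hrank : M.rank = r := by
    rw [← row_transpose] at hM
    rw [← rank_transpose, hM.rank_matrix, Fintype.card_fin]
  have hrows : span K (range M.row) = ⊤ :=
    eq_top_of_finrank_eq (by rw [← rank_eq_finrank_span_row, hrank, finrank_fin_fun])
  obtain ⟨s, e, -, hspan, hli⟩ := exists_fin_linearIndependent_span_eq (K := K) M.row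
  obtain rfl : s = r := by
    rw [← Fintype.card_fin s, linearIndependent_iff_card_eq_finrank_span.mp hli, Set.finrank,
      hspan, hrows, finrank_top, finrank_fin_fun]
  exact ⟨e, (isUnit_iff_isUnit_det _).mp (linearIndependent_rows_iff_isUnit.mp hli) |>.ne_zero⟩

theorem Matrix.mulVec_extend_zero {R m n κ : Type*} [NonUnitalNonAssocSemiring R] [Fintype n]
    [Fintype κ] (M : Matrix m n R) {a : κ → n} (ha : Injective a) (k : κ → R) :
    M *ᵥ extend a k 0 = M.submatrix id a *ᵥ k := by
  ext i
  refine (Fintype.sum_of_injective a ha _ _ (fun j hj => ?_) fun v => ?_).symm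
  · simp [extend_apply' _ _ _ hj]
  · simp [ha.extend_apply]

theorem Matrix.exists_mulVec_eq_extend_inv_submatrix_mulVec {K m n : Type*} [Field K]
    [Fintype m] [Fintype n] (M : Matrix m n K) (b : m → K) (h : ∃ x, M *ᵥ x = b) :
    ∃ (r : ℕ) (e : Fin r → m) (a : Fin r → n), Injective a ∧ (M.submatrix e a).det ≠ 0 ∧
      M *ᵥ extend a ((M.submatrix e a)⁻¹ *ᵥ (b ∘ e)) 0 = b := by
  obtain ⟨r, a, ha, hspan, hli⟩ := exists_fin_linearIndependent_span_eq (K := K) M.col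
  have hcol : (M.submatrix id a).col = M.col ∘ a := rfl
  obtain ⟨e, he⟩ : ∃ e : Fin r → m, (M.submatrix e a).det ≠ 0 :=
    (M.submatrix id a).exists_det_submatrix_ne_zero_of_linearIndependent_col (hcol ▸ hli)
  have hb : b ∈ LinearMap.range (M.submatrix id a).mulVecLin := by
    rw [range_mulVecLin, hcol, hspan, ← range_mulVecLin]
    exact h
  obtain ⟨k, hk⟩ := hb
  have hk_eq : (M.submatrix e a)⁻¹ *ᵥ (b ∘ e) = k := by
    have hke : M.submatrix e a *ᵥ k = b ∘ e := by rw [← hk]; rfl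
    rw [← hke, mulVec_mulVec, nonsing_inv_mul _ (isUnit_iff_ne_zero.mpr he), one_mulVec]
  refine ⟨r, e, a, ha, he, ?_⟩
  rw [hk_eq, mulVec_extend_zero M ha]
  exact hk

theorem Matrix.exists_int_det_eq_abs_le_factorial {R n : Type*} [CommRing R] [Fintype n]
    [DecidableEq n] (N : Matrix n n R) (hN : ∀ i j, N i j = 0 ∨ N i j = 1) :
    ∃ z : ℤ, N.det = z ∧ |z| ≤ (Fintype.card n)! := by
  classical
  let Z : Matrix n n ℤ := of fun i j => if N i j = 0 then 0 else 1
  have hZ : Z.map (Int.castRingHom R) = N := by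
    ext i j
    by_cases h : N i j = 0
    · simp [Z, h]
    · simp only [Z, map_apply, of_apply, if_neg h, map_one]
      exact ((hN i j).resolve_left h).symm
  refine ⟨Z.det, by rw [← hZ]; exact ((Int.castRingHom R).map_det Z).symm, ?_⟩
  have hZ_le (i j : n) : |Z i j| ≤ 1 := by
    by_cases h : N i j = 0 <;> simp [Z, h]
  simpa using det_le (abv := AbsoluteValue.abs) hZ_le

theorem Matrix.exists_int_div_eq_inv_mulVec_apply {n : Type*} [Fintype n] [DecidableEq n]
    (N : Matrix n n ℚ) (c : n → ℚ) (hN : ∀ i j, N i j = 0 ∨ N i j = 1)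
    (hc : ∀ i, c i = 0 ∨ c i = 1) (hdet : N.det ≠ 0) (v : n) :
    ∃ num den : ℤ, den ≠ 0 ∧ (N⁻¹ *ᵥ c) v = num / den ∧
      |num| ≤ (Fintype.card n)! ∧ |den| ≤ (Fintype.card n)! := by
  obtain ⟨den, hden, hden_le⟩ := N.exists_int_det_eq_abs_le_factorial hN
  obtain ⟨num, hnum, hnum_le⟩ := (N.updateCol v c).exists_int_det_eq_abs_le_factorial
    fun i j => by rw [updateCol_apply]; split_ifs; exacts [hc i, hN i j]
  refine ⟨num, den, fun h => hdet (by simp [hden, h]), ?_, hnum_le, hden_le⟩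
  rw [inv_def, smul_mulVec, ← cramer_eq_adjugate_mulVec, Pi.smul_apply, cramer_apply, hnum, hden,
    Ring.inverse_eq_inv, smul_eq_mul, div_eq_inv_mul]

theorem Nat.factorial_le_two_pow_sq (n : ℕ) : n ! ≤ 2 ^ n ^ 2 :=
  calc n ! ≤ n ^ n := n.factorial_le_pow
    _ ≤ (2 ^ n) ^ n := Nat.pow_le_pow_left n.lt_two_pow_self.le n
    _ = 2 ^ n ^ 2 := by rw [← pow_mul, sq]

theorem rational_solution_small_bit_complexity (p q : ℕ)
    (A : Matrix (Fin p) (Fin q) ℚ) (b : Fin p → ℚ)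
    (hA : ∀ i j, A i j = 0 ∨ A i j = 1) (hb : ∀ i, b i = 0 ∨ b i = 1)
    (hsol : ∃ x : Fin q → ℝ,
      (A.map (fun c => (c : ℝ))).mulVec x = fun i => ((b i : ℝ))) :
    ∃ x : Fin q → ℚ, A.mulVec x = b ∧
      ∀ j, ∃ num den : ℤ, den ≠ 0 ∧ x j = (num : ℚ) / (den : ℚ) ∧
        |num| ≤ 2 ^ (5 * q ^ 2) ∧ |den| ≤ 2 ^ (5 * q ^ 2) := by
  obtain ⟨r, e, a, ha, hdet, hx⟩ := A.exists_mulVec_eq_extend_inv_submatrix_mulVec b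
    (A.exists_mulVec_eq_of_exists_map_algebraMap_mulVec_eq b hsol)
  have hrq : r ≤ q := Fin.le_of_injective a ha
  have hbound : ((r ! : ℕ) : ℤ) ≤ 2 ^ (5 * q ^ 2) := by
    have : r ! ≤ 2 ^ (5 * q ^ 2) :=
      r.factorial_le_two_pow_sq.trans (Nat.pow_le_pow_right two_pos (by nlinarith))
    exact_mod_cast this
  refine ⟨_, hx, fun j => ?_⟩
  by_cases hj : ∃ v, a v = j
  · obtain ⟨v, rfl⟩ := hj
    obtain ⟨num, den, hden, hval, hnum_le, hden_le⟩ :=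
      (A.submatrix e a).exists_int_div_eq_inv_mulVec_apply (b ∘ e) (fun _ _ => hA _ _)
        (fun _ => hb _) hdet v
    rw [Fintype.card_fin] at hnum_le hden_le
    exact ⟨num, den, hden, by rw [ha.extend_apply, hval], hnum_le.trans hbound,
      hden_le.trans hbound⟩
  · refine ⟨0, 1, one_ne_zero, by simp [extend_apply' _ _ _ hj], by simp, ?_⟩
    simpa using one_le_pow₀ (by norm_num : (1 : ℤ) ≤ 2)
end

section
/- Let t, r ≥ 1, s = 2^t, and n = s·r + s^r + 1. Let H = {h₁, …, h_s} be the set of 𝔽₂-linear functions {0,1}^t → {0,1}. Define f : {0,1}^n → {0,1} as follows: an input is parsed as (g₁, …, g_r, T, b) where each g_j : {0,1}^t → {0,1} is given by its 2^t-bit truth table, T : [s]^r → {0,1} is given by its s^r bits, and b is one bit; set f(g₁,…,g_r,T,b) = T(i₁,…,i_r) if every g_j belongs to H, with g_j = h_{i_j}, and f(g₁,…,g_r,T,b) = b otherwise. Then f is truly n-variate and pdeg(f) ≤ 3·pdeg(AND_{r·s²}) + r + 1. -/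
open scoped Classical

def ANDf (m : ℕ) : (Fin m → Bool) → Bool := fun a => decide (∀ i, a i = true)

/-- `h : {0,1}^t → {0,1}` is `𝔽₂`-linear. -/
def IsLinearBool {t : ℕ} (h : (Fin t → Bool) → Bool) : Prop :=
  ∀ α β : Fin t → Bool, h (fun i => xor (α i) (β i)) = xor (h α) (h β)

/-- The index type of the `n = s·r + s^r + 1` input variables: truth tables of
`g₁,…,g_r` (each `s = 2^t` bits), the table `T : [s]^r → {0,1}`, and the bit `b`. -/
abbrev AdwIndex (t r s : ℕ) : Type :=
  (Fin r × (Fin t → Bool)) ⊕ (Fin r → Fin s) ⊕ Unit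

/-!
Sensitivity: each input bit is flipped at an explicit input on which the flip changes `f` — a bit of
a table `g_j = h_{i₀}` (after the flip `g_j` is no longer `h_{i₀}`), the addressed entry of `T`, and
`b` at constant-one (hence nonlinear) tables.

Degree: the tables are all linear iff the `r·s²` checks `g_j(α ⊕ β) = g_j(α) ⊕ g_j(β)` hold, and
each check is a cubic polynomial in the inputs; substituting them into a probabilistic polynomial
for `AND` costs degree `3·pdeg(AND)`. If the checks pass, `f` is computed exactly by
`∑_idx T(idx) ∏_j [g_j = h_{idx j}]` of degree `r + 1`, since for linear `g, h` the indicator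
`[g = h]` is the correlation `2⁻ᵗ ∑_α (-1)^{g α} (-1)^{h α}`, linear in the table of `g`;
otherwise `f = b`. The answer of `AND` selects between the two.
-/

open MvPolynomial

namespace MvPolynomial

variable {σ τ R : Type*} [CommSemiring R]

theorem totalDegree_bind₁_le (g : σ → MvPolynomial τ R) {k : ℕ}
    (hg : ∀ i, (g i).totalDegree ≤ k) (p : MvPolynomial σ R) :
    (bind₁ g p).totalDegree ≤ k * p.totalDegree := by
  conv_lhs => rw [p.as_sum]
  rw [map_sum]
  refine (totalDegree_finsetSum _ _).trans (Finset.sup_le fun v hv => ?_)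
  rw [bind₁_monomial]
  refine (totalDegree_mul _ _).trans ?_
  rw [totalDegree_C, zero_add]
  calc (∏ i ∈ v.support, g i ^ v i).totalDegree
      ≤ ∑ i ∈ v.support, v i * k :=
        (totalDegree_finsetProd _ _).trans (Finset.sum_le_sum fun i _ =>
          (totalDegree_pow _ _).trans (Nat.mul_le_mul_left _ (hg i)))
    _ = k * v.degree := by rw [← Finset.sum_mul, mul_comm]; rfl
    _ ≤ k * p.totalDegree := Nat.mul_le_mul_left _ (le_totalDegree hv)

theorem eval_bind₁ (x : τ → R) (g : σ → MvPolynomial τ R) (p : MvPolynomial σ R) :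
    eval x (bind₁ g p) = eval (fun i => eval x (g i)) p :=
  eval₂Hom_bind₁ _ _ _ _

end MvPolynomial

section BooleanPolynomials

variable {ι : Type}

noncomputable def xorPoly (p q : MvPolynomial ι ℝ) : MvPolynomial ι ℝ := p + q - 2 * p * q

theorem totalDegree_xorPoly_le (p q : MvPolynomial ι ℝ) :
    (xorPoly p q).totalDegree ≤ p.totalDegree + q.totalDegree := by
  have h2pq : (2 * p * q).totalDegree ≤ p.totalDegree + q.totalDegree := by
    refine (totalDegree_mul _ _).trans (Nat.add_le_add_right ((totalDegree_mul _ _).trans ?_) _)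
    rw [show (2 : MvPolynomial ι ℝ) = C 2 from rfl, totalDegree_C, zero_add]
  refine (totalDegree_sub _ _).trans (max_le ((totalDegree_add _ _).trans ?_) h2pq)
  exact max_le (Nat.le_add_right _ _) (Nat.le_add_left _ _)

theorem evalBool_xorPoly {a : ι → Bool} {p q : MvPolynomial ι ℝ} {b c : Bool}
    (hp : evalBool a p = if b then 1 else 0) (hq : evalBool a q = if c then 1 else 0) :
    evalBool a (xorPoly p q) = if xor b c then 1 else 0 := by
  simp only [evalBool, xorPoly, map_add, map_sub, map_mul, map_ofNat] at hp hq ⊢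
  rw [hp, hq]
  cases b <;> cases c <;> norm_num

theorem evalBool_X (a : ι → Bool) (i : ι) :
    evalBool a (X i) = if a i then 1 else 0 :=
  eval_X _

end BooleanPolynomials

section ProbabilisticDegree

variable {ι κ : Type} {f : (ι → Bool) → Bool} {ε : ℝ} {d : ℕ}

theorem pdeg_le_of_hasProbPoly (h : HasProbPoly f ε d) : pdeg ε f ≤ d :=
  Nat.sInf_le h

theorem hasProbPoly_pdeg_s17 (h : HasProbPoly f ε d) : HasProbPoly f ε (pdeg ε f) :=
  Nat.sInf_mem (s := {d | HasProbPoly f ε d}) ⟨d, h⟩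

theorem hasProbPoly_of_evalBool (hε : 0 ≤ ε) {P : MvPolynomial ι ℝ} (hd : P.totalDegree ≤ d)
    (hP : ∀ a, evalBool a P = if f a then 1 else 0) : HasProbPoly f ε d :=
  ⟨1, fun _ => 1, fun _ => P, fun _ => zero_le_one, by simp, fun _ => hd,
    fun a => by simp [hP a, hε]⟩

theorem hasProbPoly_ANDf (hε : 0 ≤ ε) (m : ℕ) : HasProbPoly (ANDf m) ε m := by
  refine hasProbPoly_of_evalBool hε (P := ∏ i, X i) ?_ fun a => ?_
  · refine (totalDegree_finsetProd _ _).trans ?_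
    simp
  · simp [evalBool, Finset.prod_boole, ANDf]

theorem HasProbPoly.select {g : (κ → Bool) → Bool} {D e : ℕ} (hg : HasProbPoly g ε D)
    (test : (ι → Bool) → κ → Bool) (c : κ → MvPolynomial ι ℝ)
    (hc_deg : ∀ k, (c k).totalDegree ≤ e) (hc : ∀ a k, evalBool a (c k) = if test a k then 1 else 0)
    {P₁ P₀ : MvPolynomial ι ℝ} (hP₁ : P₁.totalDegree ≤ d) (hP₀ : P₀.totalDegree ≤ d)
    (h₁ : ∀ a, g (test a) = true → evalBool a P₁ = if f a then 1 else 0)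
    (h₀ : ∀ a, g (test a) = false → evalBool a P₀ = if f a then 1 else 0) :
    HasProbPoly f ε (e * D + d) := by
  obtain ⟨k, w, R, hw_nonneg, hw_sum, hR_deg, hR_err⟩ := hg
  have hE_deg (i : Fin k) : (bind₁ c (R i)).totalDegree ≤ e * D :=
    (totalDegree_bind₁_le c hc_deg _).trans (Nat.mul_le_mul_left e (hR_deg i))
  have hE_eval (a : ι → Bool) (i : Fin k) :
      evalBool a (bind₁ c (R i)) = evalBool (test a) (R i) := by
    simp only [evalBool, eval_bind₁]
    exact congrArg (eval · (R i)) (funext (hc a))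
  refine ⟨k, w, fun i => bind₁ c (R i) * P₁ + (1 - bind₁ c (R i)) * P₀, hw_nonneg, hw_sum,
    fun i => ?_, fun a => ?_⟩
  · have h1 : (1 - bind₁ c (R i)).totalDegree ≤ e * D :=
      (totalDegree_sub _ _).trans (max_le (by simp) (hE_deg i))
    refine (totalDegree_add _ _).trans (max_le ?_ ?_) <;> refine (totalDegree_mul _ _).trans ?_
    · exact Nat.add_le_add (hE_deg i) hP₁
    · exact Nat.add_le_add h1 hP₀
  refine le_trans (Finset.sum_le_sum_of_subset_of_nonneg (fun i => ?_) fun i _ _ => hw_nonneg i)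
    (hR_err (test a))
  simp only [Finset.mem_filter, Finset.mem_univ, true_and]
  refine mt fun hR => ?_
  have hE := (hE_eval a i).trans hR
  simp only [evalBool, map_add, map_mul, map_sub, map_one] at hE ⊢
  rw [hE]
  cases hga : g (test a)
  · simp [← h₀ a hga, evalBool]
  · simp [← h₁ a hga, evalBool]

end ProbabilisticDegree

section LinearBooleanFunctions

variable {t : ℕ}

def boolSign (b : Bool) : ℝ := if b then -1 else 1

theorem boolSign_xor (b c : Bool) : boolSign (xor b c) = boolSign b * boolSign c := by
  cases b <;> cases c <;> norm_num [boolSign]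

theorem IsLinearBool.map_zero {g : (Fin t → Bool) → Bool} (hg : IsLinearBool g) :
    g (fun _ => false) = false := by
  simpa using hg (fun _ => false) (fun _ => false)

theorem IsLinearBool.xor {g h : (Fin t → Bool) → Bool} (hg : IsLinearBool g)
    (hh : IsLinearBool h) : IsLinearBool fun α => Bool.xor (g α) (h α) := by
  intro α β
  simp only [hg α β, hh α β]
  cases g α <;> cases g β <;> cases h α <;> cases h β <;> rfl

theorem IsLinearBool.sum_boolSign_eq_zero {d : (Fin t → Bool) → Bool} (hd : IsLinearBool d)
    {β : Fin t → Bool} (hβ : d β = true) : ∑ α, boolSign (d α) = 0 := by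
  let τ : Equiv.Perm (Fin t → Bool) :=
    Function.Involutive.toPerm (fun α i => Bool.xor (α i) (β i)) fun α => by simp
  have hτ (α : Fin t → Bool) : boolSign (d (τ α)) = -boolSign (d α) := by
    change boolSign (d fun i => Bool.xor (α i) (β i)) = _
    rw [hd, hβ, boolSign_xor]
    simp [boolSign]
  have hflip : ∑ α, boolSign (d α) = -∑ α, boolSign (d α) := calc
    _ = ∑ α, boolSign (d (τ α)) := (Equiv.sum_comp τ _).symm
    _ = -∑ α, boolSign (d α) := by simp only [hτ, Finset.sum_neg_distrib]
  linarith

theorem IsLinearBool.sum_boolSign_mul {g h : (Fin t → Bool) → Bool} (hg : IsLinearBool g)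
    (hh : IsLinearBool h) :
    ∑ α, boolSign (g α) * boolSign (h α) = if g = h then 2 ^ t else 0 := by
  simp only [← boolSign_xor]
  split_ifs with hgh
  · simp [hgh, boolSign]
  · obtain ⟨β, hβ⟩ : ∃ β, g β ≠ h β := Function.ne_iff.mp hgh
    exact (hg.xor hh).sum_boolSign_eq_zero (by simpa using hβ)

end LinearBooleanFunctions

section TruthTablePolynomials

variable {ι : Type} {t : ℕ}

theorem evalBool_one_sub_two_mul_X (a : ι → Bool) (i : ι) :
    evalBool a (1 - 2 * X i) = boolSign (a i) := by
  simp only [evalBool, map_sub, map_mul, map_one, map_ofNat, eval_X]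
  cases a i <;> norm_num [boolSign]

noncomputable def matchPoly (h : (Fin t → Bool) → Bool) (v : (Fin t → Bool) → ι) :
    MvPolynomial ι ℝ :=
  C ((2 ^ t)⁻¹) * ∑ α, C (boolSign (h α)) * (1 - 2 * X (v α))

theorem totalDegree_matchPoly_le (h : (Fin t → Bool) → Bool) (v : (Fin t → Bool) → ι) :
    (matchPoly h v).totalDegree ≤ 1 := by
  refine (totalDegree_mul _ _).trans ?_
  rw [totalDegree_C, zero_add]
  refine (totalDegree_finsetSum _ _).trans (Finset.sup_le fun α _ => ?_)
  refine (totalDegree_mul _ _).trans ?_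
  rw [totalDegree_C, zero_add]
  refine (totalDegree_sub _ _).trans (max_le (by simp) ((totalDegree_mul _ _).trans ?_))
  rw [show (2 : MvPolynomial ι ℝ) = C 2 from rfl, totalDegree_C, totalDegree_X]

theorem evalBool_matchPoly {h : (Fin t → Bool) → Bool} {v : (Fin t → Bool) → ι}
    {a : ι → Bool} (hh : IsLinearBool h) (ha : IsLinearBool fun α => a (v α)) :
    evalBool a (matchPoly h v) = if h = (fun α => a (v α)) then 1 else 0 := by
  have hsign (α : Fin t → Bool) :
      eval (fun i => if a i then (1 : ℝ) else 0) (1 - 2 * X (v α)) = boolSign (a (v α)) :=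
    evalBool_one_sub_two_mul_X a (v α)
  simp only [evalBool, matchPoly, map_mul, map_sum, eval_C, hsign, hh.sum_boolSign_mul ha]
  split_ifs <;> simp

noncomputable def linearityTestPoly (v : (Fin t → Bool) → ι) (α β : Fin t → Bool) :
    MvPolynomial ι ℝ :=
  1 - xorPoly (X (v fun i => xor (α i) (β i))) (xorPoly (X (v α)) (X (v β)))

theorem totalDegree_linearityTestPoly_le (v : (Fin t → Bool) → ι) (α β : Fin t → Bool) :
    (linearityTestPoly v α β).totalDegree ≤ 3 := by
  refine (totalDegree_sub _ _).trans (max_le (by simp) ?_)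
  refine (totalDegree_xorPoly_le _ _).trans ?_
  have := totalDegree_xorPoly_le (X (R := ℝ) (v α)) (X (v β))
  simp only [totalDegree_X] at this ⊢
  omega

theorem evalBool_linearityTestPoly (a : ι → Bool) (v : (Fin t → Bool) → ι)
    (α β : Fin t → Bool) :
    evalBool a (linearityTestPoly v α β) =
      if a (v fun i => xor (α i) (β i)) = xor (a (v α)) (a (v β)) then 1 else 0 := by
  have hxor := evalBool_xorPoly (evalBool_X a (v fun i => xor (α i) (β i)))
    (evalBool_xorPoly (evalBool_X a (v α)) (evalBool_X a (v β)))
  simp only [linearityTestPoly, evalBool, map_sub, map_one] at hxor ⊢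
  rw [hxor]
  cases a (v fun i => xor (α i) (β i)) <;> cases a (v α) <;> cases a (v β) <;> norm_num

end TruthTablePolynomials

section AddressingFunction

variable {t r s : ℕ}

noncomputable def selectorPoly (h : Fin s → (Fin t → Bool) → Bool) :
    MvPolynomial (AdwIndex t r s) ℝ :=
  ∑ idx : Fin r → Fin s,
    X (Sum.inr (Sum.inl idx)) * ∏ j, matchPoly (h (idx j)) fun α => Sum.inl (j, α)

theorem totalDegree_selectorPoly_le (h : Fin s → (Fin t → Bool) → Bool) :
    (selectorPoly (r := r) h).totalDegree ≤ r + 1 := by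
  refine (totalDegree_finsetSum _ _).trans (Finset.sup_le fun idx _ => ?_)
  refine (totalDegree_mul _ _).trans ?_
  rw [totalDegree_X, add_comm]
  refine Nat.add_le_add_right ((totalDegree_finsetProd _ _).trans ?_) 1
  calc ∑ j, (matchPoly (h (idx j)) fun α => (Sum.inl (j, α) : AdwIndex t r s)).totalDegree
      ≤ ∑ _j : Fin r, 1 := Finset.sum_le_sum fun j _ => totalDegree_matchPoly_le _ _
    _ = r := by simp

theorem evalBool_selectorPoly {h : Fin s → (Fin t → Bool) → Bool} (hinj : Function.Injective h)
    (hlin : ∀ i, IsLinearBool (h i)) {a : AdwIndex t r s → Bool} {idx : Fin r → Fin s}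
    (ha : ∀ j α, a (Sum.inl (j, α)) = h (idx j) α) :
    evalBool a (selectorPoly h) = if a (Sum.inr (Sum.inl idx)) then 1 else 0 := by
  have hmatch (idx' : Fin r → Fin s) (j : Fin r) :
      evalBool a (matchPoly (h (idx' j)) fun α => Sum.inl (j, α)) =
        if idx' j = idx j then 1 else 0 := by
    have hg : (fun α => a (Sum.inl (j, α))) = h (idx j) := funext (ha j)
    rw [evalBool_matchPoly (hlin _) (hg ▸ hlin (idx j)), hg]
    simp only [hinj.eq_iff]
  simp only [evalBool] at hmatch
  simp [evalBool, selectorPoly, hmatch, Finset.prod_boole, ← _root_.funext_iff]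

variable {h : Fin s → (Fin t → Bool) → Bool} {f : (AdwIndex t r s → Bool) → Bool}

theorem pdeg_addressing_le {ε : ℝ} (hε : 0 ≤ ε) (hs : s = 2 ^ t)
    (hinj : Function.Injective h) (hlin : ∀ i, IsLinearBool (h i))
    (hall : ∀ g, IsLinearBool g → ∃ i, g = h i)
    (hf1 : ∀ x idx, (∀ j α, x (Sum.inl (j, α)) = h (idx j) α) → f x = x (Sum.inr (Sum.inl idx)))
    (hf2 : ∀ x, (¬ ∀ j, ∃ i, ∀ α, x (Sum.inl (j, α)) = h i α) → f x = x (Sum.inr (Sum.inr ()))) :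
    pdeg ε f ≤ 3 * pdeg ε (ANDf (r * s ^ 2)) + r + 1 := by
  let e : Fin (r * s ^ 2) ≃ Fin r × (Fin t → Bool) × (Fin t → Bool) :=
    (Fintype.equivFinOfCardEq (by simp [hs, sq])).symm
  let table (a : AdwIndex t r s → Bool) (j : Fin r) : (Fin t → Bool) → Bool :=
    fun α => a (Sum.inl (j, α))
  let test (a : AdwIndex t r s → Bool) (k : Fin (r * s ^ 2)) : Bool :=
    decide (table a (e k).1 (fun i => xor ((e k).2.1 i) ((e k).2.2 i)) =
      xor (table a (e k).1 (e k).2.1) (table a (e k).1 (e k).2.2))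
  have hAND_test (a) : ANDf (r * s ^ 2) (test a) = true ↔ ∀ j, IsLinearBool (table a j) := by
    simp only [ANDf, test, decide_eq_true_eq, e.forall_congr_left, Equiv.apply_symm_apply]
    exact ⟨fun H j α β => H (j, α, β), fun H q => H q.1 q.2.1 q.2.2⟩
  have hlin_iff (a) : (∀ j, IsLinearBool (table a j)) ↔ ∀ j, ∃ i, ∀ α, table a j α = h i α := by
    refine forall_congr' fun j => ⟨fun H => ?_, fun ⟨i, hi⟩ => funext hi ▸ hlin i⟩
    obtain ⟨i, hi⟩ := hall _ H
    exact ⟨i, congrFun hi⟩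
  have hsel := (hasProbPoly_pdeg_s17 (hasProbPoly_ANDf hε (r * s ^ 2))).select test
    (fun k => linearityTestPoly (fun α => Sum.inl ((e k).1, α)) (e k).2.1 (e k).2.2)
    (fun k => totalDegree_linearityTestPoly_le _ _ _)
    (fun a k => by simpa [test, table] using evalBool_linearityTestPoly a _ _ _)
    (totalDegree_selectorPoly_le h) (P₀ := X (Sum.inr (Sum.inr ())))
    (by simp) (f := f) (fun a ha => ?_) (fun a ha => ?_)
  · exact pdeg_le_of_hasProbPoly (by simpa only [add_assoc] using hsel)
  · choose idx hidx using (hlin_iff a).mp ((hAND_test a).mp ha)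
    rw [evalBool_selectorPoly hinj hlin hidx, hf1 a idx hidx]
  · rw [evalBool_X, hf2 a fun H => by simp [(hAND_test a).mpr ((hlin_iff a).mpr H)] at ha]

theorem exists_update_table_bit_ne [DecidableEq (AdwIndex t r s)] (i₀ : Fin s)
    (hf1 : ∀ x idx, (∀ j α, x (Sum.inl (j, α)) = h (idx j) α) → f x = x (Sum.inr (Sum.inl idx)))
    (hf2 : ∀ x, (¬ ∀ j, ∃ i, ∀ α, x (Sum.inl (j, α)) = h i α) → f x = x (Sum.inr (Sum.inr ())))
    (j₀ : Fin r) (α₀ : Fin t → Bool) :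
    ∃ a, f (Function.update a (Sum.inl (j₀, α₀)) (!a (Sum.inl (j₀, α₀)))) ≠ f a := by
  let a : AdwIndex t r s → Bool :=
    Sum.elim (fun p => h i₀ p.2) (Sum.elim (fun idx => decide (idx = fun _ => i₀)) fun _ => false)
  have hfa : f a = true := by simp [hf1 a (fun _ => i₀) fun _ _ => rfl, a]
  refine ⟨a, ?_⟩
  rw [hfa]
  generalize ha' : Function.update a (Sum.inl (j₀, α₀)) (!a (Sum.inl (j₀, α₀))) = a'
  have ha'_inr (v) : a' (Sum.inr v) = a (Sum.inr v) := by
    rw [← ha', Function.update_of_ne Sum.inr_ne_inl]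
  have ha'_inl : a' (Sum.inl (j₀, α₀)) = !h i₀ α₀ := by
    rw [← ha', Function.update_self]
    rfl
  by_cases H : ∀ j, ∃ i, ∀ α, a' (Sum.inl (j, α)) = h i α
  · choose idx hidx using H
    have hj₀ : idx j₀ ≠ i₀ := fun he => by simpa [ha'_inl, he] using hidx j₀ α₀
    have hidx_ne : idx ≠ fun _ => i₀ := fun he => hj₀ (congrFun he j₀)
    simp [hf1 a' idx hidx, ha'_inr, a, hidx_ne]
  · simp [hf2 a' H, ha'_inr, a]

theorem exists_update_addressed_bit_ne [DecidableEq (AdwIndex t r s)]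
    (hf1 : ∀ x idx, (∀ j α, x (Sum.inl (j, α)) = h (idx j) α) → f x = x (Sum.inr (Sum.inl idx)))
    (idx₀ : Fin r → Fin s) :
    ∃ a, f (Function.update a (Sum.inr (Sum.inl idx₀)) (!a (Sum.inr (Sum.inl idx₀)))) ≠ f a := by
  let a : AdwIndex t r s → Bool := Sum.elim (fun p => h (idx₀ p.1) p.2) fun _ => false
  refine ⟨a, ?_⟩
  generalize ha' : Function.update a (Sum.inr (Sum.inl idx₀)) (!a (Sum.inr (Sum.inl idx₀))) = a'
  have ha'_inl (j α) : a' (Sum.inl (j, α)) = h (idx₀ j) α := by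
    rw [← ha', Function.update_of_ne Sum.inl_ne_inr]
    rfl
  have ha'_idx₀ : a' (Sum.inr (Sum.inl idx₀)) = true := by
    rw [← ha', Function.update_self]
    rfl
  rw [hf1 a' idx₀ ha'_inl, hf1 a idx₀ fun _ _ => rfl, ha'_idx₀]
  simp [a]

theorem exists_update_default_bit_ne [DecidableEq (AdwIndex t r s)] (hr : 1 ≤ r)
    (hlin : ∀ i, IsLinearBool (h i))
    (hf2 : ∀ x, (¬ ∀ j, ∃ i, ∀ α, x (Sum.inl (j, α)) = h i α) → f x = x (Sum.inr (Sum.inr ()))) :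
    ∃ a, f (Function.update a (Sum.inr (Sum.inr ())) (!a (Sum.inr (Sum.inr ())))) ≠ f a := by
  have hnonlinear (x : AdwIndex t r s → Bool) (hx : ∀ j α, x (Sum.inl (j, α)) = true) :
      ¬ ∀ j, ∃ i, ∀ α, x (Sum.inl (j, α)) = h i α := fun H => by
    obtain ⟨i, hi⟩ := H ⟨0, hr⟩
    simpa [hx, (hlin i).map_zero] using hi fun _ => false
  let a : AdwIndex t r s → Bool := Sum.elim (fun _ => true) fun _ => false
  refine ⟨a, ?_⟩
  generalize ha' : Function.update a (Sum.inr (Sum.inr ())) (!a (Sum.inr (Sum.inr ()))) = a'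
  have ha'_inl (j α) : a' (Sum.inl (j, α)) = true := by
    rw [← ha', Function.update_of_ne Sum.inl_ne_inr]
    rfl
  have ha'_default : a' (Sum.inr (Sum.inr ())) = true := by
    rw [← ha', Function.update_self]
    rfl
  rw [hf2 a' (hnonlinear a' ha'_inl), hf2 a (hnonlinear a fun _ _ => rfl), ha'_default]
  simp [a]

theorem trulyVariate_addressing (hr : 1 ≤ r) (hlin : ∀ i, IsLinearBool (h i))
    (hall : ∀ g, IsLinearBool g → ∃ i, g = h i)
    (hf1 : ∀ x idx, (∀ j α, x (Sum.inl (j, α)) = h (idx j) α) → f x = x (Sum.inr (Sum.inl idx)))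
    (hf2 : ∀ x, (¬ ∀ j, ∃ i, ∀ α, x (Sum.inl (j, α)) = h i α) → f x = x (Sum.inr (Sum.inr ()))) :
    TrulyVariate f := by
  -- the instance `TrulyVariate` uses in `Function.update`
  let : DecidableEq (AdwIndex t r s) := Classical.decEq _
  obtain ⟨i₀, -⟩ := hall (fun _ => false) fun _ _ => rfl
  rintro (⟨j, α⟩ | idx | ⟨⟨⟩⟩)
  exacts [exists_update_table_bit_ne i₀ hf1 hf2 j α, exists_update_addressed_bit_ne hf1 idx,
    exists_update_default_bit_ne hr hlin hf2]

end AddressingFunction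

theorem encoded_addressing_function_general (t r : ℕ) (hr : 1 ≤ r)
    (s : ℕ) (hs : s = 2 ^ t)
    (h : Fin s → ((Fin t → Bool) → Bool))
    (hinj : Function.Injective h)
    (hlin : ∀ i, IsLinearBool (h i))
    (hall : ∀ g : (Fin t → Bool) → Bool, IsLinearBool g → ∃ i, g = h i)
    (f : (AdwIndex t r s → Bool) → Bool)
    (hf1 : ∀ (x : AdwIndex t r s → Bool) (idx : Fin r → Fin s),
      (∀ (j : Fin r) (α : Fin t → Bool), x (Sum.inl (j, α)) = h (idx j) α) →
      f x = x (Sum.inr (Sum.inl idx)))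
    (hf2 : ∀ x : AdwIndex t r s → Bool,
      (¬ ∀ j : Fin r, ∃ i : Fin s, ∀ α : Fin t → Bool, x (Sum.inl (j, α)) = h i α) →
      f x = x (Sum.inr (Sum.inr ()))) :
    TrulyVariate f ∧
      pdeg (1/3) f ≤ 3 * pdeg (1/3) (ANDf (r * s ^ 2)) + r + 1 :=
  ⟨trulyVariate_addressing hr hlin hall hf1 hf2,
    pdeg_addressing_le (by norm_num) hs hinj hlin hall hf1 hf2⟩

theorem encoded_addressing_function (t r : ℕ) (ht : 1 ≤ t) (hr : 1 ≤ r)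
    (s : ℕ) (hs : s = 2 ^ t)
    (h : Fin s → ((Fin t → Bool) → Bool))
    (hinj : Function.Injective h)
    (hlin : ∀ i, IsLinearBool (h i))
    (hall : ∀ g : (Fin t → Bool) → Bool, IsLinearBool g → ∃ i, g = h i)
    (f : (AdwIndex t r s → Bool) → Bool)
    (hf1 : ∀ (x : AdwIndex t r s → Bool) (idx : Fin r → Fin s),
      (∀ (j : Fin r) (α : Fin t → Bool), x (Sum.inl (j, α)) = h (idx j) α) →
      f x = x (Sum.inr (Sum.inl idx)))
    (hf2 : ∀ x : AdwIndex t r s → Bool,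
      (¬ ∀ j : Fin r, ∃ i : Fin s, ∀ α : Fin t → Bool, x (Sum.inl (j, α)) = h i α) →
      f x = x (Sum.inr (Sum.inr ()))) :
    TrulyVariate f ∧
      pdeg (1/3) f ≤ 3 * pdeg (1/3) (ANDf (r * s ^ 2)) + r + 1 :=
  encoded_addressing_function_general t r hr s hs h hinj hlin hall f hf1 hf2
end
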